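/- arXiv:2604.11345 — 4 statements merged into one kernel-verified Lean document; each statement's English description precedes it below -/
import Mathlib

section
/- Assume the Weierstrass decomposition, historical data, and persistent excitation hypotheses, and assume the (n+p) × n stacked matrix col(E, C) has rank n. Suppose there exist matrices Σ_{X_p} ∈ ℝ^{n×n}, Σ_{U_p} ∈ ℝ^{n×m}, Σ_{Y_p} ∈ ℝ^{n×p}, Σ_{Y_f} ∈ ℝ^{n×p} such that X_f = Σ_{X_p}·X_p + Σ_{U_p}·U_p + Σ_{Y_p}·Y_p + Σ_{Y_f}·Y_f and Σ_{X_p} is Schur stable. Then for every trajectory (u, x, y) of the descriptor system and every initial estimate x̂(0) ∈ ℝ^n, the sequence defined recursively by x̂(k+1) = Σ_{X_p}·x̂(k) + Σ_{U_p}·u(k) + Σ_{Y_p}·y(k) + Σ_{Y_f}·y(k+1) satisfies ‖x(k) − x̂(k)‖ → 0 as k → ∞. -/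
open Matrix

noncomputable section

/-- Data matrix of depth `T` whose `k`-th column is `f (k + off)`. -/
def histMat {ι : Type} (T : ℕ) (f : ℕ → ι → ℝ) (off : ℕ) : Matrix ι (Fin T) ℝ :=
  Matrix.of fun i k => f ((k : ℕ) + off) i

/-- A real square matrix is Schur stable if every complex eigenvalue has modulus `< 1`. -/
def SchurStable {n : ℕ} (M : Matrix (Fin n) (Fin n) ℝ) : Prop :=
  ∀ μ ∈ spectrum ℂ (M.map (fun r : ℝ => (r : ℂ))), ‖μ‖ < 1

/-- View a real matrix as a complex matrix. -/
def cmap {a b : Type} (M : Matrix a b ℝ) : Matrix a b ℂ := M.map (fun r => (r : ℂ))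

/-!
In Weierstrass coordinates `P⁻¹ x = (z₁, z₂)` a trajectory splits into the slow recursion
`z₁(k+1) = A₁ z₁(k) + B₁ u(k)` and the fast one `R z₂(k+1) = z₂(k) + B₂ u(k)`, whose only solution
is `z₂(k) = -∑_{j<s} Rʲ B₂ u(k+j)` because `R` is nilpotent. Hence `x(k)`, `x(k+1)` and `u(k)` are
fixed linear images of the extended state `(z₁(k), u(k), …, u(k+s))`. The data identity for `X_f`
says that one linear combination of these maps vanishes at every extended state of the data, and
by persistent excitation those span the whole space. So the map vanishes identically, every
trajectory satisfies `x(k+1) = Σ_Xp x(k) + Σ_Up u(k) + Σ_Yp y(k) + Σ_Yf y(k+1)`, and the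
estimation error obeys `e(k) = Σ_Xpᵏ e(0)`, which tends to zero by Gelfand's formula.
-/

open Filter Topology Finset

theorem tendsto_pow_atTop_nhds_zero_of_spectralRadius_lt_one {A : Type*} [NormedRing A]
    [NormedAlgebra ℂ A] [CompleteSpace A] {a : A} (h : spectralRadius ℂ a < 1) :
    Tendsto (a ^ ·) atTop (𝓝 0) := by
  obtain ⟨r, hρr, hr⟩ := ENNReal.lt_iff_exists_nnreal_btwn.mp h
  have hr1 : (r : ℝ) < 1 := by exact_mod_cast hr
  have hbound : ∀ᶠ k : ℕ in atTop, ‖a ^ k‖ ≤ (r : ℝ) ^ k := by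
    filter_upwards [(spectrum.pow_norm_pow_one_div_tendsto_nhds_spectralRadius
      a).eventually_lt_const hρr, eventually_ne_atTop 0] with k hk hk0
    rw [← ENNReal.ofReal_coe_nnreal, ENNReal.ofReal_lt_ofReal_iff_of_nonneg (by positivity)] at hk
    calc ‖a ^ k‖ = (‖a ^ k‖ ^ (1 / k : ℝ)) ^ k := by
          rw [one_div, Real.rpow_inv_natCast_pow (norm_nonneg _) hk0]
      _ ≤ (r : ℝ) ^ k := by gcongr
  exact squeeze_zero_norm' hbound (tendsto_pow_atTop_nhds_zero_of_lt_one r.coe_nonneg hr1)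

theorem cmap_pow {n : ℕ} (M : Matrix (Fin n) (Fin n) ℝ) (k : ℕ) : cmap (M ^ k) = cmap M ^ k :=
  map_pow Complex.ofRealHom.mapMatrix M k

section

attribute [local instance] Matrix.linftyOpNormedAddCommGroup Matrix.linftyOpNormedRing
  Matrix.linftyOpNormedAlgebra

theorem SchurStable.spectralRadius_lt_one {n : ℕ} {M : Matrix (Fin n) (Fin n) ℝ}
    (h : SchurStable M) : spectralRadius ℂ (cmap M) < 1 := by
  rcases (spectrum ℂ (cmap M)).eq_empty_or_nonempty with hempty | hne
  · simp [spectralRadius, hempty]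
  · exact_mod_cast spectrum.spectralRadius_lt_of_forall_lt_of_nonempty hne
      fun μ hμ => by exact_mod_cast h μ hμ

-- `linftyOpNormedRing` induces the entrywise topology, so Gelfand's formula yields the limit in
-- the usual topology of matrices.
theorem SchurStable.tendsto_pow {n : ℕ} {M : Matrix (Fin n) (Fin n) ℝ}
    (h : SchurStable M) : Tendsto (M ^ ·) atTop (𝓝 0) := by
  have hc : Tendsto (cmap M ^ ·) atTop (𝓝 0) :=
    tendsto_pow_atTop_nhds_zero_of_spectralRadius_lt_one h.spectralRadius_lt_one
  have hre : Continuous fun N : Matrix (Fin n) (Fin n) ℂ => N.map Complex.re :=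
    continuous_id.matrix_map Complex.continuous_re
  convert (hre.tendsto 0).comp hc using 1
  · funext k
    simp only [Function.comp_apply, ← cmap_pow]
    ext i j
    simp [cmap]
  · simp

end

theorem SchurStable.tendsto_pow_mulVec {n : ℕ} {M : Matrix (Fin n) (Fin n) ℝ}
    (h : SchurStable M) (v : Fin n → ℝ) : Tendsto (fun k => M ^ k *ᵥ v) atTop (𝓝 0) := by
  have hcont : Continuous fun N : Matrix (Fin n) (Fin n) ℝ => N *ᵥ v :=
    continuous_id.matrix_mulVec continuous_const
  simpa [Function.comp_def] using (hcont.tendsto 0).comp h.tendsto_pow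

theorem sub_eq_pow_mulVec_sub {ι : Type*} [Fintype ι] [DecidableEq ι] {M : Matrix ι ι ℝ}
    {a b : ℕ → ι → ℝ} {f : ℕ → ι → ℝ} (ha : ∀ k, a (k + 1) = M *ᵥ a k + f k)
    (hb : ∀ k, b (k + 1) = M *ᵥ b k + f k) (k : ℕ) :
    a k - b k = M ^ k *ᵥ (a 0 - b 0) := by
  induction k with
  | zero => simp
  | succ k ih =>
    rw [ha, hb, add_sub_add_right_eq_sub, ← mulVec_sub, ih, mulVec_mulVec, pow_succ']

theorem Matrix.span_range_col_eq_top_of_rank_eq {K ι τ : Type*} [Field K] [Fintype ι]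
    [Fintype τ] {Ξ : Matrix ι τ K} (h : Ξ.rank = Fintype.card ι) :
    Submodule.span K (Set.range Ξ.col) = ⊤ :=
  Submodule.eq_top_of_finrank_eq <| by
    rw [← rank_eq_finrank_span_cols, h, Module.finrank_fintype_fun_eq_card]

theorem histMat_mulVec_single {ι : Type} (T : ℕ) (f : ℕ → ι → ℝ) (off : ℕ) (t : Fin T) :
    histMat T f off *ᵥ Pi.single t 1 = f (t + off) := by
  rw [mulVec_single_one]
  rfl

theorem eq_neg_sum_of_pow_eq_zero {K ι κ : Type*} [CommRing K] [Fintype ι] [DecidableEq ι]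
    [Fintype κ] {s : ℕ} {R : Matrix ι ι K} (hR : R ^ s = 0) {B : Matrix ι κ K}
    {w : ℕ → ι → K} {u : ℕ → κ → K} (h : ∀ k, R *ᵥ w (k + 1) = w k + B *ᵥ u k) (k : ℕ) :
    w k = -∑ j ∈ range s, (R ^ j * B) *ᵥ u (k + j) := by
  have unroll : ∀ t, w k = R ^ t *ᵥ w (k + t) - ∑ j ∈ range t, (R ^ j * B) *ᵥ u (k + j) := by
    intro t
    induction t with
    | zero => simp
    | succ t ih =>
      rw [ih, sum_range_succ, pow_succ, ← mulVec_mulVec, ← add_assoc, h, mulVec_add,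
        mulVec_mulVec]
      abel
  rw [unroll s, hR, zero_mulVec, zero_sub]

section DataDriven

variable {n1 n2 m s : ℕ}

def fromCoords (P : Matrix (Fin (n1 + n2)) (Fin (n1 + n2)) ℝ) :
    (Fin n1 → ℝ) × (Fin n2 → ℝ) →ₗ[ℝ] Fin (n1 + n2) → ℝ :=
  P.mulVecLin ∘ₗ LinearMap.funLeft ℝ ℝ finSumFinEquiv.symm ∘ₗ
    (LinearEquiv.sumArrowLequivProdArrow _ _ ℝ ℝ).symm.toLinearMap

theorem fromCoords_apply (P : Matrix (Fin (n1 + n2)) (Fin (n1 + n2)) ℝ) (a : Fin n1 → ℝ)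
    (b : Fin n2 → ℝ) : fromCoords P (a, b) = P *ᵥ (Sum.elim a b ∘ finSumFinEquiv.symm) :=
  rfl

theorem exists_weierstrass_coords {E A S P : Matrix (Fin (n1 + n2)) (Fin (n1 + n2)) ℝ}
    {B : Matrix (Fin (n1 + n2)) (Fin m) ℝ} {A1 : Matrix (Fin n1) (Fin n1) ℝ}
    {R : Matrix (Fin n2) (Fin n2) ℝ} {B1 : Matrix (Fin n1) (Fin m) ℝ}
    {B2 : Matrix (Fin n2) (Fin m) ℝ} (hP : IsUnit P)
    (hE : (S * E * P).submatrix finSumFinEquiv finSumFinEquiv = fromBlocks 1 0 0 R)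
    (hA : (S * A * P).submatrix finSumFinEquiv finSumFinEquiv = fromBlocks A1 0 0 1)
    (hB : (S * B).submatrix finSumFinEquiv id = fromRows B1 B2)
    {u : ℕ → Fin m → ℝ} {x : ℕ → Fin (n1 + n2) → ℝ}
    (htraj : ∀ k, E *ᵥ x (k + 1) = A *ᵥ x k + B *ᵥ u k) :
    ∃ (z1 : ℕ → Fin n1 → ℝ) (z2 : ℕ → Fin n2 → ℝ), (∀ k, x k = fromCoords P (z1 k, z2 k)) ∧
      (∀ k, z1 (k + 1) = A1 *ᵥ z1 k + B1 *ᵥ u k) ∧ ∀ k, R *ᵥ z2 (k + 1) = z2 k + B2 *ᵥ u k := by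
  set e := (finSumFinEquiv : Fin n1 ⊕ Fin n2 ≃ Fin (n1 + n2))
  set z : ℕ → Fin n1 ⊕ Fin n2 → ℝ := fun k => (P⁻¹ *ᵥ x k) ∘ e
  have hx : ∀ k, x k = P *ᵥ (z k ∘ e.symm) := fun k => by
    simp [z, Function.comp_def, mulVec_mulVec,
      mul_nonsing_inv _ ((isUnit_iff_isUnit_det _).mp hP)]
  have hblock : ∀ k, fromBlocks 1 0 0 R *ᵥ z (k + 1) =
      fromBlocks A1 0 0 1 *ᵥ z k + fromRows B1 B2 *ᵥ u k := fun k => by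
    rw [← hE, ← hA, ← hB, submatrix_mulVec_equiv, submatrix_mulVec_equiv,
      show (id : Fin m → Fin m) = Equiv.refl _ from rfl, submatrix_mulVec_equiv]
    simp only [← mulVec_mulVec, ← hx, htraj, mulVec_add]
    rfl
  refine ⟨fun k => z k ∘ Sum.inl, fun k => z k ∘ Sum.inr, fun k => ?_, fun k => ?_, fun k => ?_⟩
  · rw [hx k, fromCoords_apply, Sum.elim_comp_inl_inr]
  · funext i
    simpa [fromBlocks_mulVec, fromRows_mulVec] using congrFun (hblock k) (Sum.inl i)
  · funext i
    simpa [fromBlocks_mulVec, fromRows_mulVec] using congrFun (hblock k) (Sum.inr i)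

abbrev ExtIndex (n1 s m : ℕ) := Fin n1 ⊕ (Fin (s + 1) × Fin m)

-- `col(z₁(k), u(k), …, u(k+s))`, the `k`-th column of the persistent-excitation matrix.
def extState (s : ℕ) (z1 : ℕ → Fin n1 → ℝ) (u : ℕ → Fin m → ℝ) (k : ℕ) :
    ExtIndex n1 s m → ℝ :=
  Sum.elim (z1 k) fun jl => u (k + jl.1) jl.2

def slowPart : (ExtIndex n1 s m → ℝ) →ₗ[ℝ] Fin n1 → ℝ := LinearMap.funLeft ℝ ℝ Sum.inl

def inputAt (j : Fin (s + 1)) : (ExtIndex n1 s m → ℝ) →ₗ[ℝ] Fin m → ℝ :=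
  LinearMap.funLeft ℝ ℝ fun l => Sum.inr (j, l)

def fastPart (R : Matrix (Fin n2) (Fin n2) ℝ) (B2 : Matrix (Fin n2) (Fin m) ℝ)
    (shift : Fin s → Fin (s + 1)) : (ExtIndex n1 s m → ℝ) →ₗ[ℝ] Fin n2 → ℝ :=
  -∑ j : Fin s, (R ^ (j : ℕ) * B2).mulVecLin ∘ₗ inputAt (shift j)

theorem inputAt_extState (j : Fin (s + 1)) (z1 : ℕ → Fin n1 → ℝ) (u : ℕ → Fin m → ℝ)
    (k : ℕ) : inputAt j (extState s z1 u k) = u (k + j) :=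
  rfl

theorem fastPart_extState (R : Matrix (Fin n2) (Fin n2) ℝ) (B2 : Matrix (Fin n2) (Fin m) ℝ)
    (shift : Fin s → Fin (s + 1)) (z1 : ℕ → Fin n1 → ℝ) (u : ℕ → Fin m → ℝ) (k : ℕ) :
    fastPart R B2 shift (extState s z1 u k) =
      -∑ j : Fin s, (R ^ (j : ℕ) * B2) *ᵥ u (k + shift j) := by
  simp [fastPart, inputAt_extState]

def stateOfInputs (P : Matrix (Fin (n1 + n2)) (Fin (n1 + n2)) ℝ)
    (R : Matrix (Fin n2) (Fin n2) ℝ) (B2 : Matrix (Fin n2) (Fin m) ℝ) (s : ℕ) (z1 : Fin n1 → ℝ)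
    (u : ℕ → Fin m → ℝ) (k : ℕ) : Fin (n1 + n2) → ℝ :=
  fromCoords P (z1, -∑ j ∈ range s, (R ^ j * B2) *ᵥ u (k + j))

variable (P : Matrix (Fin (n1 + n2)) (Fin (n1 + n2)) ℝ) (A1 : Matrix (Fin n1) (Fin n1) ℝ)
  (B1 : Matrix (Fin n1) (Fin m) ℝ) (R : Matrix (Fin n2) (Fin n2) ℝ)
  (B2 : Matrix (Fin n2) (Fin m) ℝ)

def stateNow : (ExtIndex n1 s m → ℝ) →ₗ[ℝ] Fin (n1 + n2) → ℝ :=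
  fromCoords P ∘ₗ slowPart.prod (fastPart R B2 Fin.castSucc)

def stateNext : (ExtIndex n1 s m → ℝ) →ₗ[ℝ] Fin (n1 + n2) → ℝ :=
  fromCoords P ∘ₗ (A1.mulVecLin ∘ₗ slowPart + B1.mulVecLin ∘ₗ inputAt 0).prod
    (fastPart R B2 Fin.succ)

variable {P A1 B1 R B2}

theorem stateNow_extState (z1 : ℕ → Fin n1 → ℝ) (u : ℕ → Fin m → ℝ) (k : ℕ) :
    stateNow P R B2 (extState s z1 u k) = stateOfInputs P R B2 s (z1 k) u k := by
  simp only [stateNow, LinearMap.comp_apply, LinearMap.prod_apply, Function.prod,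
    fastPart_extState, Fin.val_castSucc]
  rw [Fin.sum_univ_eq_sum_range (fun j => (R ^ j * B2) *ᵥ u (k + j))]
  rfl

theorem stateNext_extState {z1 : ℕ → Fin n1 → ℝ} {u : ℕ → Fin m → ℝ} {k : ℕ}
    (hz1 : z1 (k + 1) = A1 *ᵥ z1 k + B1 *ᵥ u k) :
    stateNext P A1 B1 R B2 (extState s z1 u k) =
      stateOfInputs P R B2 s (z1 (k + 1)) u (k + 1) := by
  simp only [stateNext, LinearMap.comp_apply, LinearMap.prod_apply, Function.prod,
    fastPart_extState, Fin.val_succ, ← add_assoc, add_right_comm k _ 1]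
  rw [Fin.sum_univ_eq_sum_range (fun j => (R ^ j * B2) *ᵥ u (k + 1 + j)), hz1]
  rfl

theorem next_state_eq_of_persistently_exciting {p T : ℕ}
    {C : Matrix (Fin p) (Fin (n1 + n2)) ℝ} {SXp : Matrix (Fin (n1 + n2)) (Fin (n1 + n2)) ℝ}
    {SUp : Matrix (Fin (n1 + n2)) (Fin m) ℝ}
    {SYp SYf : Matrix (Fin (n1 + n2)) (Fin p) ℝ}
    {ud : ℕ → Fin m → ℝ} {z1d : ℕ → Fin n1 → ℝ} {xd : ℕ → Fin (n1 + n2) → ℝ}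
    {yd : ℕ → Fin p → ℝ}
    (hPE : (Matrix.of fun i (t : Fin T) => extState s z1d ud t i).rank = n1 + (s + 1) * m)
    (hz1d : ∀ t < T, z1d (t + 1) = A1 *ᵥ z1d t + B1 *ᵥ ud t)
    (hxd : ∀ t ≤ T, xd t = stateOfInputs P R B2 s (z1d t) ud t)
    (hyd : ∀ t ≤ T, yd t = C *ᵥ xd t)
    (hSig : histMat T xd 1
      = SXp * histMat T xd 0 + SUp * histMat T ud 0 + SYp * histMat T yd 0 + SYf * histMat T yd 1)
    {z1 : ℕ → Fin n1 → ℝ} {u : ℕ → Fin m → ℝ} {x : ℕ → Fin (n1 + n2) → ℝ} {k : ℕ}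
    (hz1 : z1 (k + 1) = A1 *ᵥ z1 k + B1 *ᵥ u k)
    (hx : ∀ i, x i = stateOfInputs P R B2 s (z1 i) u i) :
    x (k + 1) = SXp *ᵥ x k + SUp *ᵥ u k + SYp *ᵥ (C *ᵥ x k) + SYf *ᵥ (C *ᵥ x (k + 1)) := by
  set G := stateNext P A1 B1 R B2 - (SXp.mulVecLin ∘ₗ stateNow P R B2 +
    SUp.mulVecLin ∘ₗ inputAt 0 + (SYp * C).mulVecLin ∘ₗ stateNow P R B2 +
    (SYf * C).mulVecLin ∘ₗ stateNext P A1 B1 R B2)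
  have hG : ∀ {z1 : ℕ → Fin n1 → ℝ} {u : ℕ → Fin m → ℝ} {x : ℕ → Fin (n1 + n2) → ℝ}
      {k : ℕ},
      z1 (k + 1) = A1 *ᵥ z1 k + B1 *ᵥ u k → x k = stateOfInputs P R B2 s (z1 k) u k →
      x (k + 1) = stateOfInputs P R B2 s (z1 (k + 1)) u (k + 1) →
      G (extState s z1 u k) =
        x (k + 1) - (SXp *ᵥ x k + SUp *ᵥ u k + SYp *ᵥ (C *ᵥ x k) + SYf *ᵥ (C *ᵥ x (k + 1))) := by
    intro z1 u x k hz1 hx0 hx1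
    simp [G, stateNow_extState, stateNext_extState hz1, inputAt_extState, ← hx0, ← hx1,
      mulVec_mulVec]
  -- `hSig` makes `G` vanish on the data columns, which span by persistent excitation.
  have hG0 : G = 0 := by
    refine LinearMap.ext_on_range (span_range_col_eq_top_of_rank_eq (hPE.trans (by simp)))
      fun t => ?_
    rw [show Matrix.col _ t = extState s z1d ud t from rfl,
      hG (hz1d t t.2) (hxd t t.2.le) (hxd (t + 1) t.2), LinearMap.zero_apply, sub_eq_zero]
    have := congrArg (· *ᵥ Pi.single t 1) hSig
    simp only [add_mulVec, ← mulVec_mulVec, histMat_mulVec_single, add_zero] at this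
    rwa [hyd _ t.2.le, hyd _ t.2] at this
  have := hG hz1 (hx k) (hx (k + 1))
  rwa [hG0, LinearMap.zero_apply, eq_comm, sub_eq_zero] at this

end DataDriven

theorem stmt_1_general (n1 n2 s m p T : ℕ)
    (E A : Matrix (Fin (n1 + n2)) (Fin (n1 + n2)) ℝ)
    (B : Matrix (Fin (n1 + n2)) (Fin m) ℝ)
    (C : Matrix (Fin p) (Fin (n1 + n2)) ℝ)
    (S P : Matrix (Fin (n1 + n2)) (Fin (n1 + n2)) ℝ)
    (hP : IsUnit P)
    (A1 : Matrix (Fin n1) (Fin n1) ℝ) (R : Matrix (Fin n2) (Fin n2) ℝ)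
    (B1 : Matrix (Fin n1) (Fin m) ℝ) (B2 : Matrix (Fin n2) (Fin m) ℝ)
    (hR : R ^ s = 0)
    (hE : (S * E * P).submatrix ⇑finSumFinEquiv ⇑finSumFinEquiv = Matrix.fromBlocks 1 0 0 R)
    (hA : (S * A * P).submatrix ⇑finSumFinEquiv ⇑finSumFinEquiv = Matrix.fromBlocks A1 0 0 1)
    (hB : (S * B).submatrix ⇑finSumFinEquiv id = Matrix.fromRows B1 B2)
    (ud : ℕ → Fin m → ℝ) (z1d : ℕ → Fin n1 → ℝ) (z2d : ℕ → Fin n2 → ℝ)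
    (xd : ℕ → Fin (n1 + n2) → ℝ) (yd : ℕ → Fin p → ℝ)
    (hz1 : ∀ k < T, z1d (k + 1) = A1 *ᵥ z1d k + B1 *ᵥ ud k)
    (hz2 : ∀ k ≤ T, z2d k = -(∑ j ∈ Finset.range s, ((R ^ j * B2) *ᵥ ud (k + j))))
    (hxd : ∀ k ≤ T, xd k = P *ᵥ (fun i => Sum.elim (z1d k) (z2d k) (finSumFinEquiv.symm i)))
    (hyd : ∀ k ≤ T, yd k = C *ᵥ xd k)
    (hPE : (Matrix.of fun (i : Fin n1 ⊕ (Fin (s + 1) × Fin m)) (k : Fin T) =>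
        Sum.elim (z1d (k : ℕ))
          (fun jl => ud ((k : ℕ) + (jl.1 : ℕ)) jl.2) i).rank = n1 + (s + 1) * m)
    (SXp : Matrix (Fin (n1 + n2)) (Fin (n1 + n2)) ℝ)
    (SUp : Matrix (Fin (n1 + n2)) (Fin m) ℝ)
    (SYp SYf : Matrix (Fin (n1 + n2)) (Fin p) ℝ)
    (hSig : histMat T xd 1
      = SXp * histMat T xd 0 + SUp * histMat T ud 0 + SYp * histMat T yd 0 + SYf * histMat T yd 1)
    (hSchur : SchurStable SXp)
    (u : ℕ → Fin m → ℝ) (x : ℕ → Fin (n1 + n2) → ℝ) (y : ℕ → Fin p → ℝ)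
    (htraj1 : ∀ k : ℕ, E *ᵥ x (k + 1) = A *ᵥ x k + B *ᵥ u k)
    (htraj2 : ∀ k : ℕ, y k = C *ᵥ x k)
    (xhat : ℕ → Fin (n1 + n2) → ℝ)
    (hobs : ∀ k : ℕ, xhat (k + 1)
      = SXp *ᵥ xhat k + SUp *ᵥ u k + SYp *ᵥ y k + SYf *ᵥ y (k + 1)) :
    Filter.Tendsto (fun k => ‖x k - xhat k‖) Filter.atTop (nhds 0) := by
  obtain ⟨w1, w2, hx, hw1, hw2⟩ := exists_weierstrass_coords hP hE hA hB htraj1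
  have hx' : ∀ k, x k = stateOfInputs P R B2 s (w1 k) u k := fun k => by
    rw [hx k, eq_neg_sum_of_pow_eq_zero hR hw2 k]
    rfl
  have hxd' : ∀ t ≤ T, xd t = stateOfInputs P R B2 s (z1d t) ud t := fun t ht => by
    rw [hxd t ht, hz2 t ht]
    rfl
  have hstep : ∀ k, x (k + 1) = SXp *ᵥ x k + (SUp *ᵥ u k + SYp *ᵥ y k + SYf *ᵥ y (k + 1)) :=
    fun k => by
      rw [htraj2, htraj2, ← add_assoc, ← add_assoc]
      exact next_state_eq_of_persistently_exciting hPE hz1 hxd' hyd hSig (hw1 k) hx'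
  have herr := sub_eq_pow_mulVec_sub (b := xhat) hstep fun k => by simp only [hobs, add_assoc]
  exact (tendsto_zero_iff_norm_tendsto_zero.mp (hSchur.tendsto_pow_mulVec (x 0 - xhat 0))).congr
    fun k => by rw [herr k]

theorem stmt_1 (n1 n2 s m p T : ℕ) (hs : 1 ≤ s) (hT : 1 ≤ T)
    (E A : Matrix (Fin (n1 + n2)) (Fin (n1 + n2)) ℝ)
    (B : Matrix (Fin (n1 + n2)) (Fin m) ℝ)
    (C : Matrix (Fin p) (Fin (n1 + n2)) ℝ)
    (S P : Matrix (Fin (n1 + n2)) (Fin (n1 + n2)) ℝ)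
    (hS : IsUnit S) (hP : IsUnit P)
    (A1 : Matrix (Fin n1) (Fin n1) ℝ) (R : Matrix (Fin n2) (Fin n2) ℝ)
    (B1 : Matrix (Fin n1) (Fin m) ℝ) (B2 : Matrix (Fin n2) (Fin m) ℝ)
    (C1 : Matrix (Fin p) (Fin n1) ℝ) (C2 : Matrix (Fin p) (Fin n2) ℝ)
    (hR : R ^ s = 0)
    (hE : (S * E * P).submatrix ⇑finSumFinEquiv ⇑finSumFinEquiv = Matrix.fromBlocks 1 0 0 R)
    (hA : (S * A * P).submatrix ⇑finSumFinEquiv ⇑finSumFinEquiv = Matrix.fromBlocks A1 0 0 1)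
    (hB : (S * B).submatrix ⇑finSumFinEquiv id = Matrix.fromRows B1 B2)
    (hC : (C * P).submatrix id ⇑finSumFinEquiv = Matrix.fromCols C1 C2)
    (ud : ℕ → Fin m → ℝ) (z1d : ℕ → Fin n1 → ℝ) (z2d : ℕ → Fin n2 → ℝ)
    (xd : ℕ → Fin (n1 + n2) → ℝ) (yd : ℕ → Fin p → ℝ)
    (hz1 : ∀ k < T, z1d (k + 1) = A1 *ᵥ z1d k + B1 *ᵥ ud k)
    (hz2 : ∀ k ≤ T, z2d k = -(∑ j ∈ Finset.range s, ((R ^ j * B2) *ᵥ ud (k + j))))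
    (hxd : ∀ k ≤ T, xd k = P *ᵥ (fun i => Sum.elim (z1d k) (z2d k) (finSumFinEquiv.symm i)))
    (hyd : ∀ k ≤ T, yd k = C *ᵥ xd k)
    (hPE : (Matrix.of fun (i : Fin n1 ⊕ (Fin (s + 1) × Fin m)) (k : Fin T) =>
        Sum.elim (z1d (k : ℕ))
          (fun jl => ud ((k : ℕ) + (jl.1 : ℕ)) jl.2) i).rank = n1 + (s + 1) * m)
    (hEC : (Matrix.fromRows E C).rank = n1 + n2)
    (SXp : Matrix (Fin (n1 + n2)) (Fin (n1 + n2)) ℝ)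
    (SUp : Matrix (Fin (n1 + n2)) (Fin m) ℝ)
    (SYp SYf : Matrix (Fin (n1 + n2)) (Fin p) ℝ)
    (hSig : histMat T xd 1
      = SXp * histMat T xd 0 + SUp * histMat T ud 0 + SYp * histMat T yd 0 + SYf * histMat T yd 1)
    (hSchur : SchurStable SXp)
    (u : ℕ → Fin m → ℝ) (x : ℕ → Fin (n1 + n2) → ℝ) (y : ℕ → Fin p → ℝ)
    (htraj1 : ∀ k : ℕ, E *ᵥ x (k + 1) = A *ᵥ x k + B *ᵥ u k)
    (htraj2 : ∀ k : ℕ, y k = C *ᵥ x k)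
    (xhat : ℕ → Fin (n1 + n2) → ℝ)
    (hobs : ∀ k : ℕ, xhat (k + 1)
      = SXp *ᵥ xhat k + SUp *ᵥ u k + SYp *ᵥ y k + SYf *ᵥ y (k + 1)) :
    Filter.Tendsto (fun k => ‖x k - xhat k‖) Filter.atTop (nhds 0) :=
  stmt_1_general n1 n2 s m p T E A B C S P hP A1 R B1 B2 hR hE hA hB ud z1d z2d xd yd hz1 hz2 hxd
    hyd hPE SXp SUp SYp SYf hSig hSchur u x y htraj1 htraj2 xhat hobs
end
end

section
/- Assume the Weierstrass decomposition, historical data, and persistent excitation hypotheses, and assume the (n+p) × n stacked matrix col(E, C) has rank n. If for every λ ∈ ℂ with |λ| ≥ 1 the rank over ℂ of col(λ·X_p − X_f, U_p, Y_p, Y_f) equals the rank of col(X_p, U_p, Y_f), then for every λ ∈ ℂ with |λ| ≥ 1 the rank over ℂ of the (n+p) × n matrix col(λ·E − A, C) equals n (i.e. the descriptor system is detectable). -/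
/-!
Fix `λ` and write `X₀, X₁, U₀` for the complexified data matrices, so that `Y₀ = C X₀` and
`Y₁ = C X₁`. The data obey `E X₁ = A X₀ + B' U₀` with `B' = S⁻¹ col(B₁, B₂)`, so injectivity of
`col(E, C)` puts the kernel of `col(X₀, U₀, Y₁)` inside the kernel of `col(λX₀ - X₁, U₀, Y₀, Y₁)`,
and `g ↦ X₀ g` maps the latter into the kernel of the pencil `col(λE - A, C)`, with kernel exactly
the former. The map is onto: in Weierstrass coordinates a kernel vector of the pencil has zero fast
part (`R` is nilpotent) and an eigenvector of `A₁` as slow part, and persistency of excitation gives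
a combination of data columns with that slow state and with `u(k), …, u(k+s)` all zero, hence with
zero fast states. Rank–nullity turns the equal ranks of the two data matrices into a trivial kernel
of the pencil.
-/

open Matrix

noncomputable section

section Complexification

variable {a b c : Type}

theorem cmap_mul [Fintype b] (M : Matrix a b ℝ) (N : Matrix b c ℝ) :
    cmap (M * N) = cmap M * cmap N :=
  Matrix.map_mul (f := Complex.ofRealHom)

theorem cmap_one [DecidableEq a] : cmap (1 : Matrix a a ℝ) = 1 :=
  Matrix.map_one _ Complex.ofReal_zero Complex.ofReal_one

theorem cmap_zero : cmap (0 : Matrix a b ℝ) = 0 :=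
  Matrix.map_zero _ Complex.ofReal_zero

theorem cmap_pow_s4 [Fintype a] [DecidableEq a] (M : Matrix a a ℝ) (j : ℕ) :
    cmap (M ^ j) = cmap M ^ j :=
  map_pow Complex.ofRealHom.mapMatrix M j

theorem isUnit_cmap [Fintype a] [DecidableEq a] {M : Matrix a a ℝ} (hM : IsUnit M) :
    IsUnit (cmap M) :=
  hM.map Complex.ofRealHom.mapMatrix

theorem isNilpotent_cmap [Fintype a] [DecidableEq a] {M : Matrix a a ℝ} (hM : IsNilpotent M) :
    IsNilpotent (cmap M) :=
  hM.map Complex.ofRealHom.mapMatrix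

theorem cmap_fromBlocks {a₁ a₂ b₁ b₂ : Type} (M₁₁ : Matrix a₁ b₁ ℝ) (M₁₂ : Matrix a₁ b₂ ℝ)
    (M₂₁ : Matrix a₂ b₁ ℝ) (M₂₂ : Matrix a₂ b₂ ℝ) :
    cmap (fromBlocks M₁₁ M₁₂ M₂₁ M₂₂) = fromBlocks (cmap M₁₁) (cmap M₁₂) (cmap M₂₁) (cmap M₂₂) :=
  fromBlocks_map ..

theorem cmap_fromRows {a₁ a₂ : Type} (M₁ : Matrix a₁ b ℝ) (M₂ : Matrix a₂ b ℝ) :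
    cmap (fromRows M₁ M₂) = fromRows (cmap M₁) (cmap M₂) :=
  fromRows_map ..

theorem cmap_submatrix {a' b' : Type} (M : Matrix a b ℝ) (r : a' → a) (c : b' → b) :
    cmap (M.submatrix r c) = (cmap M).submatrix r c :=
  rfl

theorem re_cmap_mulVec [Fintype b] (M : Matrix a b ℝ) (v : b → ℂ) (i : a) :
    ((cmap M *ᵥ v) i).re = (M *ᵥ fun j => (v j).re) i := by
  simp [cmap, mulVec, dotProduct, Complex.mul_re]

theorem im_cmap_mulVec [Fintype b] (M : Matrix a b ℝ) (v : b → ℂ) (i : a) :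
    ((cmap M *ᵥ v) i).im = (M *ᵥ fun j => (v j).im) i := by
  simp [cmap, mulVec, dotProduct, Complex.mul_im]

theorem cmap_mulVec_eq_zero [Fintype b] {M : Matrix a b ℝ}
    (hM : ∀ v, M *ᵥ v = 0 → v = 0) (v : b → ℂ) (hv : cmap M *ᵥ v = 0) : v = 0 := by
  have hre := hM _ <| funext fun i => by rw [← re_cmap_mulVec, hv]; rfl
  have him := hM _ <| funext fun i => by rw [← im_cmap_mulVec, hv]; rfl
  exact funext fun j => Complex.ext (congrFun hre j) (congrFun him j)

theorem cmap_mulVec_surjective [Fintype b] {M : Matrix a b ℝ}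
    (hM : Function.Surjective M.mulVec) : Function.Surjective (cmap M).mulVec := by
  intro w
  obtain ⟨gr, hgr⟩ := hM fun i => (w i).re
  obtain ⟨gi, hgi⟩ := hM fun i => (w i).im
  refine ⟨fun k => gr k + gi k * Complex.I, funext fun i => Complex.ext ?_ ?_⟩
  · rw [re_cmap_mulVec]; simpa using congrFun hgr i
  · rw [im_cmap_mulVec]; simpa using congrFun hgi i

end Complexification

section KernelCount

open Module LinearMap

variable {K : Type*} [Field K]

theorem Matrix.rank_add_finrank_ker {m n : Type*} [Fintype n] (M : Matrix m n K) :
    M.rank + finrank K (ker M.mulVecLin) = Fintype.card n := by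
  rw [Matrix.rank, LinearMap.finrank_range_add_finrank_ker, Module.finrank_fintype_fun_eq_card]

theorem Submodule.finrank_map_add_finrank_of_inf_ker_eq {V W : Type*} [AddCommGroup V]
    [Module K V] [FiniteDimensional K V] [AddCommGroup W] [Module K W] (f : V →ₗ[K] W)
    {U U' : Submodule K V} (hle : U' ≤ U) (hker : U ⊓ ker f = U') :
    finrank K (U.map f) + finrank K U' = finrank K U := by
  have hdom : ker (f.domRestrict U) = U'.comap U.subtype := by
    rw [LinearMap.ker_domRestrict, ← hker, Submodule.comap_inf, Submodule.comap_subtype_self,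
      top_inf_eq]
  rw [← LinearMap.range_domRestrict, ← (Submodule.comapSubtypeEquivOfLe hle).finrank_eq, ← hdom,
    LinearMap.finrank_range_add_finrank_ker]

theorem Matrix.fromRows_mulVec_eq_zero_iff {m₁ m₂ n : Type*} [Fintype n]
    (M : Matrix m₁ n K) (N : Matrix m₂ n K) (v : n → K) :
    fromRows M N *ᵥ v = 0 ↔ M *ᵥ v = 0 ∧ N *ᵥ v = 0 := by
  simp only [fromRows_mulVec, funext_iff, Sum.forall, Sum.elim_inl, Sum.elim_inr, Pi.zero_apply]

theorem Matrix.eq_zero_of_mulVec_eq_zero_of_rank_eq {m n : Type*} [Fintype n]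
    {M : Matrix m n K} (hM : M.rank = Fintype.card n) {v : n → K} (hv : M *ᵥ v = 0) : v = 0 := by
  have hker : finrank K (ker M.mulVecLin) = 0 := by have := M.rank_add_finrank_ker; omega
  exact (Submodule.mem_bot K).mp (Submodule.finrank_eq_zero.mp hker ▸ hv)

theorem Matrix.mulVec_surjective_of_rank_eq {m n : Type*} [Fintype m] [Fintype n]
    {M : Matrix m n K} (hM : M.rank = Fintype.card m) : Function.Surjective M.mulVec := by
  have htop : range M.mulVecLin = ⊤ := by
    apply Submodule.eq_top_of_finrank_eq
    rw [← Matrix.rank, hM, Module.finrank_fintype_fun_eq_card]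
  exact fun w => LinearMap.range_eq_top.mp htop w

end KernelCount

section DataDetectability

open Module LinearMap

variable {K : Type*} [Field K] {n q m p τ : Type*} [Fintype n] [Fintype τ]
  {E A : Matrix q n K} {B : Matrix q m K} {C : Matrix p n K} {X0 X1 : Matrix n τ K}
  {U0 : Matrix m τ K} {lam : K}

theorem mem_ker_pencil_iff (w : n → K) :
    w ∈ ker (fromRows (lam • E - A) C).mulVecLin ↔ lam • (E *ᵥ w) = A *ᵥ w ∧ C *ᵥ w = 0 := by
  rw [mem_ker, mulVecLin_apply, fromRows_mulVec_eq_zero_iff, sub_mulVec, smul_mulVec, sub_eq_zero]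

theorem mem_ker_dataPencil_iff (g : τ → K) :
    g ∈ ker (fromRows (lam • X0 - X1) (fromRows U0 (fromRows (C * X0) (C * X1)))).mulVecLin ↔
      lam • (X0 *ᵥ g) = X1 *ᵥ g ∧ U0 *ᵥ g = 0 ∧ C *ᵥ (X0 *ᵥ g) = 0 ∧ C *ᵥ (X1 *ᵥ g) = 0 := by
  simp only [mem_ker, mulVecLin_apply, fromRows_mulVec_eq_zero_iff, sub_mulVec, smul_mulVec,
    sub_eq_zero, ← mulVec_mulVec]

theorem mem_ker_dataMatrix_iff (g : τ → K) :
    g ∈ ker (fromRows X0 (fromRows U0 (C * X1))).mulVecLin ↔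
      X0 *ᵥ g = 0 ∧ U0 *ᵥ g = 0 ∧ C *ᵥ (X1 *ᵥ g) = 0 := by
  simp only [mem_ker, mulVecLin_apply, fromRows_mulVec_eq_zero_iff, ← mulVec_mulVec]

variable [Fintype m]

theorem ker_dataMatrix_le_ker_dataPencil (hEC : ∀ v, fromRows E C *ᵥ v = 0 → v = 0)
    (hdyn : E * X1 = A * X0 + B * U0) :
    ker (fromRows X0 (fromRows U0 (C * X1))).mulVecLin ≤
      ker (fromRows (lam • X0 - X1) (fromRows U0 (fromRows (C * X0) (C * X1)))).mulVecLin := by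
  intro g hg
  obtain ⟨hX0, hU0, hY1⟩ := (mem_ker_dataMatrix_iff g).1 hg
  have hX1 : X1 *ᵥ g = 0 := hEC _ <| (fromRows_mulVec_eq_zero_iff _ _ _).2
    ⟨by rw [mulVec_mulVec, hdyn, add_mulVec, ← mulVec_mulVec, ← mulVec_mulVec, hX0, hU0,
      mulVec_zero, mulVec_zero, add_zero], hY1⟩
  exact (mem_ker_dataPencil_iff g).2
    ⟨by rw [hX0, hX1, smul_zero], hU0, by rw [hX0, mulVec_zero], hY1⟩

theorem map_ker_dataPencil_eq_ker_pencil (hdyn : E * X1 = A * X0 + B * U0)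
    (hreal : ∀ w, lam • (E *ᵥ w) = A *ᵥ w → C *ᵥ w = 0 →
      ∃ g, X0 *ᵥ g = w ∧ X1 *ᵥ g = lam • w ∧ U0 *ᵥ g = 0) :
    (ker (fromRows (lam • X0 - X1) (fromRows U0 (fromRows (C * X0) (C * X1)))).mulVecLin).map
      X0.mulVecLin = ker (fromRows (lam • E - A) C).mulVecLin := by
  refine le_antisymm ?_ fun w hw => ?_
  · rintro _ ⟨g, hg, rfl⟩
    obtain ⟨hX1, hU0, hY0, -⟩ := (mem_ker_dataPencil_iff g).1 hg
    refine (mem_ker_pencil_iff _).2 ⟨?_, hY0⟩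
    rw [mulVecLin_apply, ← mulVec_smul, hX1, mulVec_mulVec, hdyn, add_mulVec, ← mulVec_mulVec,
      ← mulVec_mulVec, hU0, mulVec_zero, add_zero]
  · obtain ⟨hpencil, hCw⟩ := (mem_ker_pencil_iff w).1 hw
    obtain ⟨g, hX0, hX1, hU0⟩ := hreal w hpencil hCw
    refine ⟨g, (mem_ker_dataPencil_iff g).2 ⟨?_, hU0, ?_, ?_⟩, hX0⟩
    · rw [hX0, hX1]
    · rw [hX0, hCw]
    · rw [hX1, mulVec_smul, hCw, smul_zero]

theorem rank_pencil_eq_card_of_rank_data_eq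
    (hEC : ∀ v, fromRows E C *ᵥ v = 0 → v = 0) (hdyn : E * X1 = A * X0 + B * U0)
    (hreal : ∀ w, lam • (E *ᵥ w) = A *ᵥ w → C *ᵥ w = 0 →
      ∃ g, X0 *ᵥ g = w ∧ X1 *ᵥ g = lam • w ∧ U0 *ᵥ g = 0)
    (hrank : (fromRows (lam • X0 - X1) (fromRows U0 (fromRows (C * X0) (C * X1)))).rank =
      (fromRows X0 (fromRows U0 (C * X1))).rank) :
    (fromRows (lam • E - A) C).rank = Fintype.card n := by
  set Mb := fromRows (lam • X0 - X1) (fromRows U0 (fromRows (C * X0) (C * X1)))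
  set Ms := fromRows X0 (fromRows U0 (C * X1))
  have hle : ker Ms.mulVecLin ≤ ker Mb.mulVecLin := ker_dataMatrix_le_ker_dataPencil hEC hdyn
  have hinf : ker Mb.mulVecLin ⊓ ker X0.mulVecLin = ker Ms.mulVecLin := by
    refine le_antisymm ?_ fun g hg => ⟨hle hg, ((mem_ker_dataMatrix_iff g).1 hg).1⟩
    rintro g ⟨hb, h0⟩
    obtain ⟨-, hU0, -, hY1⟩ := (mem_ker_dataPencil_iff g).1 hb
    exact (mem_ker_dataMatrix_iff g).2 ⟨h0, hU0, hY1⟩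
  have hcount := Submodule.finrank_map_add_finrank_of_inf_ker_eq X0.mulVecLin hle hinf
  rw [map_ker_dataPencil_eq_ker_pencil hdyn hreal] at hcount
  have hb := Mb.rank_add_finrank_ker
  have hs := Ms.rank_add_finrank_ker
  have hl := (fromRows (lam • E - A) C).rank_add_finrank_ker
  omega

end DataDetectability

section Weierstrass

theorem Matrix.eq_submatrix_symm_of_submatrix_eq {α β γ : Type*} {e : α ≃ β} {M : Matrix β β γ}
    {N : Matrix α α γ} (h : M.submatrix e e = N) : M = N.submatrix e.symm e.symm := by
  rw [← h, submatrix_submatrix]; simp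

variable {K : Type*} [CommRing K] {ι ι₁ ι₂ μ τ : Type*} [Fintype ι] [DecidableEq ι]

theorem exists_eq_mulVec_sumElim_comp (e : ι₁ ⊕ ι₂ ≃ ι) {P : Matrix ι ι K} (hP : IsUnit P)
    (w : ι → K) : ∃ v₁ v₂, w = P *ᵥ (Sum.elim v₁ v₂ ∘ e.symm) := by
  obtain ⟨v, rfl⟩ := mulVec_surjective_iff_isUnit.mpr hP w
  refine ⟨v ∘ e ∘ Sum.inl, v ∘ e ∘ Sum.inr, ?_⟩
  rw [← Function.comp_assoc, ← Function.comp_assoc, Sum.elim_comp_inl_inr]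
  simp [Function.comp_assoc]

variable [Fintype ι₂] [DecidableEq ι₂]

theorem eq_zero_of_smul_mulVec_eq_self {R : Matrix ι₂ ι₂ K} (hR : IsNilpotent R) (lam : K)
    {v : ι₂ → K} (hv : lam • (R *ᵥ v) = v) : v = 0 := by
  refine mulVec_injective_of_isUnit (hR.smul lam).isUnit_one_sub ?_
  rw [sub_mulVec, one_mulVec, smul_mulVec, hv, sub_self, mulVec_zero]

theorem mul_neg_sum_pow_mul_eq [Fintype μ] {R : Matrix ι₂ ι₂ K} {s : ℕ} (hR : R ^ s = 0)
    (B : Matrix ι₂ μ K) (U : ℕ → Matrix μ τ K) :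
    R * -∑ j ∈ Finset.range s, R ^ j * B * U (j + 1) =
      -∑ j ∈ Finset.range s, R ^ j * B * U j + B * U 0 := by
  have htel := Finset.sum_range_succ' (fun j => R ^ j * B * U j) s
  rw [Finset.sum_range_succ, hR, Matrix.zero_mul, Matrix.zero_mul, add_zero] at htel
  rw [htel, Matrix.mul_neg, Matrix.mul_sum]
  simp only [← Matrix.mul_assoc, ← pow_succ', pow_zero, Matrix.one_mul]
  abel

variable [Fintype ι₁] [DecidableEq ι₁] (e : ι₁ ⊕ ι₂ ≃ ι) {S E A P : Matrix ι ι K}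
  {A1 : Matrix ι₁ ι₁ K} {R : Matrix ι₂ ι₂ K}

theorem mul_eq_mul_add_mul_of_weierstrass [Fintype μ] (hS : IsUnit S)
    (hE : (S * E * P).submatrix e e = fromBlocks 1 0 0 R)
    (hA : (S * A * P).submatrix e e = fromBlocks A1 0 0 1)
    {Z1 Z1' : Matrix ι₁ τ K} {Z2 Z2' : Matrix ι₂ τ K} {U : Matrix μ τ K}
    {B1 : Matrix ι₁ μ K} {B2 : Matrix ι₂ μ K}
    (hslow : Z1' = A1 * Z1 + B1 * U) (hfast : R * Z2' = Z2 + B2 * U) :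
    E * (P * (fromRows Z1' Z2').submatrix e.symm id) =
      A * (P * (fromRows Z1 Z2).submatrix e.symm id) +
        (S⁻¹ * (fromRows B1 B2).submatrix e.symm id) * U := by
  have hSdet : IsUnit S.det := (isUnit_iff_isUnit_det S).mp hS
  suffices S * (E * (P * (fromRows Z1' Z2').submatrix e.symm id)) =
      S * (A * (P * (fromRows Z1 Z2).submatrix e.symm id)) +
        (fromRows B1 B2).submatrix e.symm id * U by
    calc _ = S⁻¹ * (S * (E * (P * (fromRows Z1' Z2').submatrix e.symm id))) :=
          (S.nonsing_inv_mul_cancel_left _ hSdet).symm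
      _ = _ := by rw [this, Matrix.mul_add, S.nonsing_inv_mul_cancel_left _ hSdet, Matrix.mul_assoc]
  have hBU :
      (fromRows B1 B2).submatrix e.symm id * U = (fromRows B1 B2 * U).submatrix e.symm id := by
    rw [submatrix_mul _ _ _ id _ Function.bijective_id, submatrix_id_id]
  simp only [← Matrix.mul_assoc, eq_submatrix_symm_of_submatrix_eq hE,
    eq_submatrix_symm_of_submatrix_eq hA]
  rw [submatrix_mul_equiv, submatrix_mul_equiv, hBU, fromBlocks_mul_fromRows,
    fromBlocks_mul_fromRows, fromRows_mul]
  ext i j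
  simp only [submatrix_apply, Matrix.add_apply, Matrix.one_mul, Matrix.zero_mul, add_zero, zero_add,
    hslow, hfast, id]
  rcases e.symm i with i | i <;> simp

theorem exists_eigenvector_slow_of_weierstrass (hP : IsUnit P) (hR : IsNilpotent R)
    (hE : (S * E * P).submatrix e e = fromBlocks 1 0 0 R)
    (hA : (S * A * P).submatrix e e = fromBlocks A1 0 0 1) {lam : K} {w : ι → K}
    (hw : lam • (E *ᵥ w) = A *ᵥ w) :
    ∃ w₁, A1 *ᵥ w₁ = lam • w₁ ∧ w = P *ᵥ (Sum.elim w₁ 0 ∘ e.symm) := by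
  obtain ⟨v₁, v₂, rfl⟩ := exists_eq_mulVec_sumElim_comp e hP w
  have hblocks : lam • (S *ᵥ (E *ᵥ (P *ᵥ (Sum.elim v₁ v₂ ∘ e.symm)))) =
      S *ᵥ (A *ᵥ (P *ᵥ (Sum.elim v₁ v₂ ∘ e.symm))) := by
    rw [← mulVec_smul, hw]
  simp only [mulVec_mulVec, ← Matrix.mul_assoc, eq_submatrix_symm_of_submatrix_eq hE,
    eq_submatrix_symm_of_submatrix_eq hA, submatrix_mulVec_equiv, Equiv.symm_symm,
    Function.comp_assoc, Equiv.symm_comp_self, Function.comp_id, fromBlocks_mulVec] at hblocks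
  have hcomp := fun x => congrFun hblocks (e x)
  simp only [Sum.forall, Pi.smul_apply, Function.comp_apply, Equiv.symm_apply_apply,
    Sum.elim_comp_inl, Sum.elim_comp_inr, one_mulVec, zero_mulVec, add_zero, zero_add, Sum.elim_inl,
    Sum.elim_inr] at hcomp
  obtain ⟨hslow, hfast⟩ := hcomp
  have hv₂ : v₂ = 0 := eq_zero_of_smul_mulVec_eq_self hR lam (funext hfast)
  exact ⟨v₁, (funext hslow).symm, by rw [hv₂]⟩

theorem exists_mulVec_eq_of_weierstrass [Fintype μ] [Fintype τ] (hP : IsUnit P)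
    (hR : IsNilpotent R) (hE : (S * E * P).submatrix e e = fromBlocks 1 0 0 R)
    (hA : (S * A * P).submatrix e e = fromBlocks A1 0 0 1)
    {Z1 Z1' : Matrix ι₁ τ K} {Z2 Z2' : Matrix ι₂ τ K} {U : Matrix μ τ K} {B1 : Matrix ι₁ μ K}
    (hslow : Z1' = A1 * Z1 + B1 * U)
    (hsteer : ∀ w₁, ∃ g, Z1 *ᵥ g = w₁ ∧ U *ᵥ g = 0 ∧ Z2 *ᵥ g = 0 ∧ Z2' *ᵥ g = 0)
    {lam : K} {w : ι → K} (hw : lam • (E *ᵥ w) = A *ᵥ w) :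
    ∃ g, (P * (fromRows Z1 Z2).submatrix e.symm id) *ᵥ g = w ∧
      (P * (fromRows Z1' Z2').submatrix e.symm id) *ᵥ g = lam • w ∧ U *ᵥ g = 0 := by
  obtain ⟨w₁, hw₁, rfl⟩ := exists_eigenvector_slow_of_weierstrass e hP hR hE hA hw
  obtain ⟨g, hZ1, hU, hZ2, hZ2'⟩ := hsteer w₁
  have hstate : ∀ (Y1 : Matrix ι₁ τ K) (Y2 : Matrix ι₂ τ K),
      (P * (fromRows Y1 Y2).submatrix e.symm id) *ᵥ g =
        P *ᵥ (Sum.elim (Y1 *ᵥ g) (Y2 *ᵥ g) ∘ e.symm) :=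
    fun Y1 Y2 => by rw [← mulVec_mulVec, ← fromRows_mulVec]; rfl
  have hZ1' : Z1' *ᵥ g = lam • w₁ := by
    rw [hslow, add_mulVec, ← mulVec_mulVec, ← mulVec_mulVec, hZ1, hU, hw₁, mulVec_zero, add_zero]
  refine ⟨g, by rw [hstate, hZ1, hZ2], ?_, hU⟩
  rw [hstate, hZ1', hZ2', ← mulVec_smul]
  congr 1
  ext i
  rcases h : e.symm i with i | i <;> simp [h]

end Weierstrass

section DataMatrices

variable {ι κ μ : Type} {T : ℕ}

theorem cmap_histMat_eq_mul [Fintype κ] {f : ℕ → ι → ℝ} {g : ℕ → κ → ℝ} {o o' : ℕ}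
    (M : Matrix ι κ ℝ) (h : ∀ k < T, f (k + o) = M *ᵥ g (k + o')) :
    cmap (histMat T f o) = cmap M * cmap (histMat T g o') := by
  ext i k
  simp [cmap, histMat, mul_apply, h k k.isLt, mulVec, dotProduct]

theorem cmap_histMat_succ_eq [Fintype κ] [Fintype μ] {f : ℕ → κ → ℝ} {u : ℕ → μ → ℝ}
    (M : Matrix κ κ ℝ) (N : Matrix κ μ ℝ) (h : ∀ k < T, f (k + 1) = M *ᵥ f k + N *ᵥ u k) :
    cmap (histMat T f 1) = cmap M * cmap (histMat T f 0) + cmap N * cmap (histMat T u 0) := by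
  ext i k
  simp [cmap, histMat, mul_apply, h k k.isLt, mulVec, dotProduct]

theorem cmap_histMat_eq_neg_sum [Fintype μ] {f : ℕ → κ → ℝ} {u : ℕ → μ → ℝ} {s : ℕ}
    (M : ℕ → Matrix κ μ ℝ) (h : ∀ k ≤ T, f k = -∑ j ∈ Finset.range s, M j *ᵥ u (k + j))
    {o : ℕ} (ho : o ≤ 1) :
    cmap (histMat T f o) = -∑ j ∈ Finset.range s, cmap (M j) * cmap (histMat T u (j + o)) := by
  ext i k
  simp only [cmap, histMat, map_apply, of_apply, h (k + o) (by omega)]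
  simp [Matrix.sum_apply, mul_apply, mulVec, dotProduct, Finset.sum_apply, add_comm, add_left_comm]

theorem cmap_histMat_state [Fintype ι] {ι₁ ι₂ : Type} (e : ι₁ ⊕ ι₂ ≃ ι) (P : Matrix ι ι ℝ)
    {x : ℕ → ι → ℝ} {z₁ : ℕ → ι₁ → ℝ} {z₂ : ℕ → ι₂ → ℝ}
    (hx : ∀ k ≤ T, x k = P *ᵥ (fun i => Sum.elim (z₁ k) (z₂ k) (e.symm i))) {o : ℕ} (ho : o ≤ 1) :
    cmap (histMat T x o) =
      cmap P * (fromRows (cmap (histMat T z₁ o)) (cmap (histMat T z₂ o))).submatrix e.symm id := by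
  rw [cmap_histMat_eq_mul (g := fun k => Sum.elim (z₁ k) (z₂ k) ∘ e.symm) P
    fun k hk => hx (k + o) (by omega)]
  congr 1
  ext i k
  rcases h : e.symm i with i | i <;> simp [cmap, histMat, h]

theorem cmap_histMat_fast_step [Fintype κ] [DecidableEq κ] [Fintype μ] {R : Matrix κ κ ℝ}
    {B : Matrix κ μ ℝ} {s : ℕ} (hR : R ^ s = 0) {z : ℕ → κ → ℝ} {u : ℕ → μ → ℝ}
    (hz : ∀ k ≤ T, z k = -∑ j ∈ Finset.range s, (R ^ j * B) *ᵥ u (k + j)) :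
    cmap R * cmap (histMat T z 1) = cmap (histMat T z 0) + cmap B * cmap (histMat T u 0) := by
  have hZ : ∀ o ≤ 1, cmap (histMat T z o) =
      -∑ j ∈ Finset.range s, cmap R ^ j * cmap B * cmap (histMat T u (j + o)) := fun o ho => by
    simpa only [cmap_mul, cmap_pow_s4] using cmap_histMat_eq_neg_sum _ hz ho
  rw [hZ 1 le_rfl, hZ 0 zero_le_one]
  simpa only [add_zero] using mul_neg_sum_pow_mul_eq (by rw [← cmap_pow_s4, hR, cmap_zero]) (cmap B)
    (fun j => cmap (histMat T u j))

theorem cmap_histMat_mulVec_eq_zero_of_fast [Fintype μ] {s : ℕ} {M : ℕ → Matrix κ μ ℝ}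
    {z : ℕ → κ → ℝ} {u : ℕ → μ → ℝ} (hz : ∀ k ≤ T, z k = -∑ j ∈ Finset.range s, M j *ᵥ u (k + j))
    {g : Fin T → ℂ} (hg : ∀ j ≤ s, cmap (histMat T u j) *ᵥ g = 0) {o : ℕ} (ho : o ≤ 1) :
    cmap (histMat T z o) *ᵥ g = 0 := by
  rw [cmap_histMat_eq_neg_sum M hz ho, neg_mulVec, sum_mulVec, neg_eq_zero]
  refine Finset.sum_eq_zero fun j hj => ?_
  rw [← mulVec_mulVec, hg _ (by rw [Finset.mem_range] at hj; omega), mulVec_zero]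

theorem exists_cmap_histMat_mulVec_of_rank_eq [Fintype ι] [Fintype μ] {s : ℕ} {z : ℕ → ι → ℝ}
    {u : ℕ → μ → ℝ}
    (hPE : (Matrix.of fun (i : ι ⊕ (Fin (s + 1) × μ)) (k : Fin T) =>
      Sum.elim (z k) (fun jl => u (k + jl.1) jl.2) i).rank =
        Fintype.card ι + (s + 1) * Fintype.card μ) (w : ι → ℂ) :
    ∃ g, cmap (histMat T z 0) *ᵥ g = w ∧ ∀ j ≤ s, cmap (histMat T u j) *ᵥ g = 0 := by
  have hcard : Fintype.card (ι ⊕ Fin (s + 1) × μ) = Fintype.card ι + (s + 1) * Fintype.card μ := by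
    simp
  obtain ⟨g, hg⟩ :=
    cmap_mulVec_surjective (mulVec_surjective_of_rank_eq (hPE.trans hcard.symm)) (Sum.elim w 0)
  refine ⟨g, funext fun i => ?_, fun j hj => funext fun l => ?_⟩
  · simpa [cmap, histMat, mulVec, dotProduct] using congrFun hg (Sum.inl i)
  · simpa [cmap, histMat, mulVec, dotProduct, add_comm] using
      congrFun hg (Sum.inr (⟨j, Nat.lt_succ_of_le hj⟩, l))

theorem exists_cmap_histMat_mulVec_steering [Fintype ι] [Fintype μ] {s : ℕ}
    {M : ℕ → Matrix κ μ ℝ} {z₁ : ℕ → ι → ℝ} {z₂ : ℕ → κ → ℝ} {u : ℕ → μ → ℝ}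
    (hz₂ : ∀ k ≤ T, z₂ k = -∑ j ∈ Finset.range s, M j *ᵥ u (k + j))
    (hPE : (Matrix.of fun (i : ι ⊕ (Fin (s + 1) × μ)) (k : Fin T) =>
      Sum.elim (z₁ k) (fun jl => u (k + jl.1) jl.2) i).rank =
        Fintype.card ι + (s + 1) * Fintype.card μ) (w : ι → ℂ) :
    ∃ g, cmap (histMat T z₁ 0) *ᵥ g = w ∧ cmap (histMat T u 0) *ᵥ g = 0 ∧
      cmap (histMat T z₂ 0) *ᵥ g = 0 ∧ cmap (histMat T z₂ 1) *ᵥ g = 0 := by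
  obtain ⟨g, hg₁, hgu⟩ := exists_cmap_histMat_mulVec_of_rank_eq hPE w
  exact ⟨g, hg₁, hgu 0 (Nat.zero_le s), cmap_histMat_mulVec_eq_zero_of_fast hz₂ hgu zero_le_one,
    cmap_histMat_mulVec_eq_zero_of_fast hz₂ hgu le_rfl⟩

end DataMatrices

theorem stmt_4_general (n1 n2 s m p T : ℕ)
    (E A : Matrix (Fin (n1 + n2)) (Fin (n1 + n2)) ℝ)
    (C : Matrix (Fin p) (Fin (n1 + n2)) ℝ)
    (S P : Matrix (Fin (n1 + n2)) (Fin (n1 + n2)) ℝ)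
    (hS : IsUnit S) (hP : IsUnit P)
    (A1 : Matrix (Fin n1) (Fin n1) ℝ) (R : Matrix (Fin n2) (Fin n2) ℝ)
    (B1 : Matrix (Fin n1) (Fin m) ℝ) (B2 : Matrix (Fin n2) (Fin m) ℝ)
    (hR : R ^ s = 0)
    (hE : (S * E * P).submatrix ⇑finSumFinEquiv ⇑finSumFinEquiv = Matrix.fromBlocks 1 0 0 R)
    (hA : (S * A * P).submatrix ⇑finSumFinEquiv ⇑finSumFinEquiv = Matrix.fromBlocks A1 0 0 1)
    (ud : ℕ → Fin m → ℝ) (z1d : ℕ → Fin n1 → ℝ) (z2d : ℕ → Fin n2 → ℝ)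
    (xd : ℕ → Fin (n1 + n2) → ℝ) (yd : ℕ → Fin p → ℝ)
    (hz1 : ∀ k < T, z1d (k + 1) = A1 *ᵥ z1d k + B1 *ᵥ ud k)
    (hz2 : ∀ k ≤ T, z2d k = -(∑ j ∈ Finset.range s, ((R ^ j * B2) *ᵥ ud (k + j))))
    (hxd : ∀ k ≤ T, xd k = P *ᵥ (fun i => Sum.elim (z1d k) (z2d k) (finSumFinEquiv.symm i)))
    (hyd : ∀ k ≤ T, yd k = C *ᵥ xd k)
    (hPE : (Matrix.of fun (i : Fin n1 ⊕ (Fin (s + 1) × Fin m)) (k : Fin T) =>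
        Sum.elim (z1d (k : ℕ))
          (fun jl => ud ((k : ℕ) + (jl.1 : ℕ)) jl.2) i).rank = n1 + (s + 1) * m)
    (hEC : (Matrix.fromRows E C).rank = n1 + n2)
    (hdata : ∀ lam : ℂ, 1 ≤ ‖lam‖ →
      (Matrix.fromRows (lam • cmap (histMat T xd 0) - cmap (histMat T xd 1))
        (Matrix.fromRows (cmap (histMat T ud 0))
          (Matrix.fromRows (cmap (histMat T yd 0)) (cmap (histMat T yd 1))))).rank
      = (Matrix.fromRows (cmap (histMat T xd 0))
          (Matrix.fromRows (cmap (histMat T ud 0)) (cmap (histMat T yd 1)))).rank) :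
    ∀ lam : ℂ, 1 ≤ ‖lam‖ →
      (Matrix.fromRows (lam • cmap E - cmap A) (cmap C)).rank = n1 + n2 := by
  intro lam hlam
  set e : Fin n1 ⊕ Fin n2 ≃ Fin (n1 + n2) := finSumFinEquiv
  have hEc : (cmap S * cmap E * cmap P).submatrix e e = fromBlocks 1 0 0 (cmap R) := by
    rw [← cmap_mul, ← cmap_mul, ← cmap_submatrix, hE, cmap_fromBlocks, cmap_one, cmap_zero,
      cmap_zero]
  have hAc : (cmap S * cmap A * cmap P).submatrix e e = fromBlocks (cmap A1) 0 0 1 := by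
    rw [← cmap_mul, ← cmap_mul, ← cmap_submatrix, hA, cmap_fromBlocks, cmap_one, cmap_zero,
      cmap_zero]
  have hX (o : ℕ) (ho : o ≤ 1) := cmap_histMat_state e P hxd ho
  have hY : ∀ o ≤ 1, cmap (histMat T yd o) = cmap C * cmap (histMat T xd o) :=
    fun o ho => cmap_histMat_eq_mul C fun k hk => hyd (k + o) (by omega)
  have hslow := cmap_histMat_succ_eq A1 B1 hz1
  have hdyn := mul_eq_mul_add_mul_of_weierstrass e (isUnit_cmap hS) hEc hAc hslow
    (cmap_histMat_fast_step hR hz2)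
  rw [← hX 0 zero_le_one, ← hX 1 le_rfl] at hdyn
  refine (rank_pencil_eq_card_of_rank_data_eq ?_ hdyn ?_ ?_).trans (Fintype.card_fin _)
  · rw [← cmap_fromRows]
    exact cmap_mulVec_eq_zero fun u =>
      eq_zero_of_mulVec_eq_zero_of_rank_eq (hEC.trans (Fintype.card_fin _).symm)
  · intro w hw _
    rw [hX 0 zero_le_one, hX 1 le_rfl]
    exact exists_mulVec_eq_of_weierstrass e (isUnit_cmap hP) (isNilpotent_cmap ⟨s, hR⟩) hEc hAc
      hslow (exists_cmap_histMat_mulVec_steering hz2 (hPE.trans (by simp))) hw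
  · rw [← hY 0 zero_le_one, ← hY 1 le_rfl]
    exact hdata lam hlam

theorem stmt_4 (n1 n2 s m p T : ℕ) (hs : 1 ≤ s) (hT : 1 ≤ T)
    (E A : Matrix (Fin (n1 + n2)) (Fin (n1 + n2)) ℝ)
    (B : Matrix (Fin (n1 + n2)) (Fin m) ℝ)
    (C : Matrix (Fin p) (Fin (n1 + n2)) ℝ)
    (S P : Matrix (Fin (n1 + n2)) (Fin (n1 + n2)) ℝ)
    (hS : IsUnit S) (hP : IsUnit P)
    (A1 : Matrix (Fin n1) (Fin n1) ℝ) (R : Matrix (Fin n2) (Fin n2) ℝ)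
    (B1 : Matrix (Fin n1) (Fin m) ℝ) (B2 : Matrix (Fin n2) (Fin m) ℝ)
    (C1 : Matrix (Fin p) (Fin n1) ℝ) (C2 : Matrix (Fin p) (Fin n2) ℝ)
    (hR : R ^ s = 0)
    (hE : (S * E * P).submatrix ⇑finSumFinEquiv ⇑finSumFinEquiv = Matrix.fromBlocks 1 0 0 R)
    (hA : (S * A * P).submatrix ⇑finSumFinEquiv ⇑finSumFinEquiv = Matrix.fromBlocks A1 0 0 1)
    (hB : (S * B).submatrix ⇑finSumFinEquiv id = Matrix.fromRows B1 B2)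
    (hC : (C * P).submatrix id ⇑finSumFinEquiv = Matrix.fromCols C1 C2)
    (ud : ℕ → Fin m → ℝ) (z1d : ℕ → Fin n1 → ℝ) (z2d : ℕ → Fin n2 → ℝ)
    (xd : ℕ → Fin (n1 + n2) → ℝ) (yd : ℕ → Fin p → ℝ)
    (hz1 : ∀ k < T, z1d (k + 1) = A1 *ᵥ z1d k + B1 *ᵥ ud k)
    (hz2 : ∀ k ≤ T, z2d k = -(∑ j ∈ Finset.range s, ((R ^ j * B2) *ᵥ ud (k + j))))
    (hxd : ∀ k ≤ T, xd k = P *ᵥ (fun i => Sum.elim (z1d k) (z2d k) (finSumFinEquiv.symm i)))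
    (hyd : ∀ k ≤ T, yd k = C *ᵥ xd k)
    (hPE : (Matrix.of fun (i : Fin n1 ⊕ (Fin (s + 1) × Fin m)) (k : Fin T) =>
        Sum.elim (z1d (k : ℕ))
          (fun jl => ud ((k : ℕ) + (jl.1 : ℕ)) jl.2) i).rank = n1 + (s + 1) * m)
    (hEC : (Matrix.fromRows E C).rank = n1 + n2)
    (hdata : ∀ lam : ℂ, 1 ≤ ‖lam‖ →
      (Matrix.fromRows (lam • cmap (histMat T xd 0) - cmap (histMat T xd 1))
        (Matrix.fromRows (cmap (histMat T ud 0))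
          (Matrix.fromRows (cmap (histMat T yd 0)) (cmap (histMat T yd 1))))).rank
      = (Matrix.fromRows (cmap (histMat T xd 0))
          (Matrix.fromRows (cmap (histMat T ud 0)) (cmap (histMat T yd 1)))).rank) :
    ∀ lam : ℂ, 1 ≤ ‖lam‖ →
      (Matrix.fromRows (lam • cmap E - cmap A) (cmap C)).rank = n1 + n2 :=
  stmt_4_general n1 n2 s m p T E A C S P hS hP A1 R B1 B2 hR hE hA ud z1d z2d xd yd hz1 hz2 hxd hyd
    hPE hEC hdata
end
end

section
/- Assume the Weierstrass decomposition and historical data hypotheses. If rank col(X_p, U_p, Y_f) = n + m, then the (n+p) × n stacked matrix col(E, C) has rank n. -/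
open Matrix

noncomputable section

/-!
In Weierstrass coordinates the fast state obeys `z₂(k) = -B₂ u(k) + R z₂(k+1)` (telescoping, since
`R ^ s = 0`), and `y(k+1) = C₁ (A₁ z₁(k) + B₁ u(k)) + C₂ z₂(k+1)`. Hence every data column
`col(x(k), u(k), y(k+1))` equals `Φ col(z₁(k), u(k), z₂(k+1))` for one matrix `Φ` with `n + m`
columns, so the rank hypothesis makes `Φ` injective; on the `z₂`-block this says that
`col(R, C₂)` is injective. Finally, if `E v = 0` and `C v = 0`, write `v = P (a, b)`: applying `S`
gives `a = 0` and `R b = 0`, then `C v = C₂ b = 0`, so `b = 0` and `v = 0`.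
-/

namespace Matrix

theorem rank_eq_card_width_iff_mulVec_injective {K m n : Type*} [Field K] [Fintype n]
    (A : Matrix m n K) : A.rank = Fintype.card n ↔ Function.Injective A.mulVec := by
  have h := LinearMap.finrank_range_add_finrank_ker A.mulVecLin
  rw [Module.finrank_fintype_fun_eq_card] at h
  rw [rank, ← A.coe_mulVecLin, ← LinearMap.ker_eq_bot, ← Submodule.finrank_eq_zero]
  omega

variable {K α β γ δ m n : Type*} [Semiring K] [Fintype α] [Fintype β] [Fintype n]

theorem mulVec_sumElim_of_submatrix_eq_fromCols {e : α ⊕ β ≃ n} {N : Matrix m n K}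
    {N₁ : Matrix m α K} {N₂ : Matrix m β K} (h : N.submatrix id e = fromCols N₁ N₂)
    (a : α → K) (b : β → K) :
    N *ᵥ (fun i => Sum.elim a b (e.symm i)) = N₁ *ᵥ a + N₂ *ᵥ b := by
  rw [← fromCols_mulVec_sumElim, ← h, submatrix_mulVec_equiv]
  rfl

theorem mulVec_sumElim_of_submatrix_eq_fromBlocks {e : α ⊕ β ≃ n} {e' : γ ⊕ δ ≃ m}
    {M : Matrix m n K} {A : Matrix γ α K} {B : Matrix γ β K} {C : Matrix δ α K}
    {D : Matrix δ β K} (h : M.submatrix e' e = fromBlocks A B C D) (a : α → K) (b : β → K) :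
    M *ᵥ (fun i => Sum.elim a b (e.symm i)) =
      fun i => Sum.elim (A *ᵥ a + B *ᵥ b) (C *ᵥ a + D *ᵥ b) (e'.symm i) := by
  have h' := submatrix_mulVec_equiv M (Sum.elim a b) e' e
  rw [h, fromBlocks_mulVec, Sum.elim_comp_inl, Sum.elim_comp_inr] at h'
  change M *ᵥ (Sum.elim a b ∘ e.symm) = Sum.elim _ _ ∘ e'.symm
  rw [h', Function.comp_assoc, e'.self_comp_symm, Function.comp_id]

end Matrix

section FastState

variable {K ι μ : Type*} [Ring K] [Fintype ι] [DecidableEq ι] [Fintype μ]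

def fastState (R : Matrix ι ι K) (B₂ : Matrix ι μ K) (s : ℕ) (u : ℕ → μ → K) (k : ℕ) : ι → K :=
  -(∑ j ∈ Finset.range s, ((R ^ j * B₂) *ᵥ u (k + j)))

theorem fastState_eq_neg_add_mulVec_succ {R : Matrix ι ι K} {s : ℕ} (hR : R ^ s = 0)
    (B₂ : Matrix ι μ K) (u : ℕ → μ → K) (k : ℕ) :
    fastState R B₂ s u k = -(B₂ *ᵥ u k) + R *ᵥ fastState R B₂ s u (k + 1) := by
  have hshift : R *ᵥ ∑ j ∈ Finset.range s, (R ^ j * B₂) *ᵥ u (k + 1 + j) =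
      ∑ j ∈ Finset.range s, (R ^ (j + 1) * B₂) *ᵥ u (k + (j + 1)) := by
    rw [mulVec_sum]
    refine Finset.sum_congr rfl fun j _ => ?_
    rw [mulVec_mulVec, ← Matrix.mul_assoc, ← pow_succ', add_right_comm, add_assoc]
  have hsum := Finset.sum_range_succ' (fun j => (R ^ j * B₂) *ᵥ u (k + j)) s
  rw [Finset.sum_range_succ, hR, Matrix.zero_mul, zero_mulVec, add_zero] at hsum
  simp only [fastState, mulVec_neg, hshift, hsum, pow_zero, Matrix.one_mul, add_zero]
  abel

end FastState

section LatentMatrix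

variable {K ν α β μ π : Type*} [Ring K] [Fintype α] [Fintype β] [Fintype μ]
  [DecidableEq α] [DecidableEq μ]

/-- The matrix `Φ` with `col(x(k), u(k), y(k+1)) = Φ col(z₁(k), u(k), z₂(k+1))`. -/
def latentMatrix (P : Matrix ν (α ⊕ β) K) (R : Matrix β β K) (B₂ : Matrix β μ K)
    (A₁ : Matrix α α K) (B₁ : Matrix α μ K) (C₁ : Matrix π α K) (C₂ : Matrix π β K) :
    Matrix (ν ⊕ (μ ⊕ π)) ((α ⊕ μ) ⊕ β) K :=
  fromRows (P * fromCols (fromBlocks (1 : Matrix α α K) 0 0 (-B₂)) (fromRows 0 R))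
    (fromRows (fromCols (fromCols 0 1) 0) (fromCols (fromCols (C₁ * A₁) (C₁ * B₁)) C₂))

theorem latentMatrix_mulVec (P : Matrix ν (α ⊕ β) K) (R : Matrix β β K) (B₂ : Matrix β μ K)
    (A₁ : Matrix α α K) (B₁ : Matrix α μ K) (C₁ : Matrix π α K) (C₂ : Matrix π β K)
    (z : α → K) (u : μ → K) (w : β → K) :
    latentMatrix P R B₂ A₁ B₁ C₁ C₂ *ᵥ Sum.elim (Sum.elim z u) w =
      Sum.elim (P *ᵥ Sum.elim z (-(B₂ *ᵥ u) + R *ᵥ w))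
        (Sum.elim u (C₁ *ᵥ (A₁ *ᵥ z + B₁ *ᵥ u) + C₂ *ᵥ w)) := by
  rw [latentMatrix, fromRows_mulVec, ← mulVec_mulVec]
  simp [fromBlocks_mulVec, mulVec_add, ← Sum.elim_add_add, neg_mulVec]

end LatentMatrix

theorem fromRows_mulVec_injective_of_data_rank {ν α β μ π : Type} [Fintype ν] [Fintype α]
    [Fintype β] [Fintype μ] [DecidableEq α] [DecidableEq μ] {T : ℕ}
    {e : α ⊕ β ≃ ν} {P : Matrix ν ν ℝ} {C : Matrix π ν ℝ} {R : Matrix β β ℝ}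
    {A₁ : Matrix α α ℝ} {B₁ : Matrix α μ ℝ} {B₂ : Matrix β μ ℝ} {C₁ : Matrix π α ℝ}
    {C₂ : Matrix π β ℝ} (hC : (C * P).submatrix id e = fromCols C₁ C₂)
    {ud : ℕ → μ → ℝ} {z1d : ℕ → α → ℝ} {z2d : ℕ → β → ℝ} {xd : ℕ → ν → ℝ} {yd : ℕ → π → ℝ}
    (hz1 : ∀ k < T, z1d (k + 1) = A₁ *ᵥ z1d k + B₁ *ᵥ ud k)
    (hz2 : ∀ k < T, z2d k = -(B₂ *ᵥ ud k) + R *ᵥ z2d (k + 1))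
    (hxd : ∀ k ≤ T, xd k = P *ᵥ (fun i => Sum.elim (z1d k) (z2d k) (e.symm i)))
    (hyd : ∀ k ≤ T, yd k = C *ᵥ xd k)
    (hrk : (fromRows (histMat T xd 0) (fromRows (histMat T ud 0) (histMat T yd 1))).rank =
      Fintype.card ν + Fintype.card μ) :
    Function.Injective (fromRows R C₂).mulVec := by
  set D := fromRows (histMat T xd 0) (fromRows (histMat T ud 0) (histMat T yd 1))
  set Φ := latentMatrix (P.submatrix id e) R B₂ A₁ B₁ C₁ C₂ with hΦ_def
  set Z : Matrix ((α ⊕ μ) ⊕ β) (Fin T) ℝ :=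
    of fun j k => Sum.elim (Sum.elim (z1d k) (ud k)) (z2d (k + 1)) j
  have hcol (k : Fin T) : D.col k = Φ *ᵥ Z.col k := by
    have hx : xd k =
        P.submatrix id e *ᵥ Sum.elim (z1d k) (-(B₂ *ᵥ ud k) + R *ᵥ z2d (k + 1)) := by
      rw [← hz2 k k.isLt, submatrix_mulVec_equiv, hxd k k.isLt.le]
      rfl
    have hy : yd (k + 1) = C₁ *ᵥ (A₁ *ᵥ z1d k + B₁ *ᵥ ud k) + C₂ *ᵥ z2d (k + 1) := by
      rw [← hz1 k k.isLt, ← mulVec_sumElim_of_submatrix_eq_fromCols hC, ← mulVec_mulVec,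
        ← hxd _ k.isLt, ← hyd _ k.isLt]
    rw [show Z.col k = Sum.elim (Sum.elim (z1d k) (ud k)) (z2d (k + 1)) from rfl, hΦ_def,
      latentMatrix_mulVec, ← hx, ← hy]
    ext (i | i | i) <;> rfl
  have hΦ : Function.Injective Φ.mulVec := by
    rw [← rank_eq_card_width_iff_mulVec_injective]
    refine le_antisymm (rank_le_card_width Φ) ?_
    have hD : D = Φ * Z := Matrix.ext fun i k => congrFun (hcol k) i
    have h := rank_mul_le_left Φ Z
    rw [← hD, hrk, ← Fintype.card_congr e] at h
    simpa [Fintype.card_sum, add_right_comm] using h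
  rw [← coe_mulVecLin, injective_iff_map_eq_zero]
  intro b hb
  rw [coe_mulVecLin, fromRows_mulVec, ← Sum.elim_zero_zero, Sum.elim_eq_iff] at hb
  have h0 : Φ *ᵥ Sum.elim 0 b = Φ *ᵥ 0 := by
    rw [← Sum.elim_zero_zero, hΦ_def, latentMatrix_mulVec, hb.1, hb.2]
    simp
  exact funext fun j => by simpa using congrFun (hΦ h0) (Sum.inr j)

theorem fromRows_mulVec_injective_of_weierstrass {K ν α β π : Type*} [CommRing K] [Fintype ν]
    [DecidableEq ν] [Fintype α] [Fintype β] [DecidableEq α] {e : α ⊕ β ≃ ν}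
    {S E P : Matrix ν ν K} {C : Matrix π ν K} {R : Matrix β β K} {C₁ : Matrix π α K}
    {C₂ : Matrix π β K} (hP : IsUnit P) (hE : (S * E * P).submatrix e e = fromBlocks 1 0 0 R)
    (hC : (C * P).submatrix id e = fromCols C₁ C₂)
    (hRC : Function.Injective (fromRows R C₂).mulVec) :
    Function.Injective (fromRows E C).mulVec := by
  rw [← coe_mulVecLin, injective_iff_map_eq_zero]
  intro v hv
  rw [coe_mulVecLin, fromRows_mulVec, ← Sum.elim_zero_zero, Sum.elim_eq_iff] at hv
  obtain ⟨w, rfl⟩ := mulVec_surjective_iff_isUnit.mpr hP v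
  obtain ⟨a, b, rfl⟩ : ∃ a b, w = fun i => Sum.elim a b (e.symm i) :=
    ⟨fun j => w (e (.inl j)), fun j => w (e (.inr j)), funext fun i => by
      obtain ⟨x, rfl⟩ := e.surjective i
      cases x <;> simp⟩
  have hslow : a = 0 ∧ R *ᵥ b = 0 := by
    have h : (S * E * P) *ᵥ (fun i => Sum.elim a b (e.symm i)) = 0 := by
      rw [← mulVec_mulVec, ← mulVec_mulVec, hv.1, mulVec_zero]
    rw [mulVec_sumElim_of_submatrix_eq_fromBlocks hE] at h
    exact ⟨funext fun j => by simpa using congrFun h (e (.inl j)),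
      funext fun j => by simpa using congrFun h (e (.inr j))⟩
  have hC₂ : C₂ *ᵥ b = 0 := by
    have h : (C * P) *ᵥ (fun i => Sum.elim a b (e.symm i)) = 0 := by
      rw [← mulVec_mulVec, hv.2]
    rwa [mulVec_sumElim_of_submatrix_eq_fromCols hC, hslow.1, mulVec_zero, zero_add] at h
  have hb : b = 0 :=
    hRC (by rw [fromRows_mulVec, hslow.2, hC₂, mulVec_zero, Sum.elim_zero_zero])
  simp only [hslow.1, hb, Sum.elim_zero_zero, Pi.zero_apply]
  exact P.mulVec_zero

theorem stmt_7_general (n1 n2 s m p T : ℕ)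
    (E : Matrix (Fin (n1 + n2)) (Fin (n1 + n2)) ℝ)
    (C : Matrix (Fin p) (Fin (n1 + n2)) ℝ)
    (S P : Matrix (Fin (n1 + n2)) (Fin (n1 + n2)) ℝ)
    (hP : IsUnit P)
    (A1 : Matrix (Fin n1) (Fin n1) ℝ) (R : Matrix (Fin n2) (Fin n2) ℝ)
    (B1 : Matrix (Fin n1) (Fin m) ℝ) (B2 : Matrix (Fin n2) (Fin m) ℝ)
    (C1 : Matrix (Fin p) (Fin n1) ℝ) (C2 : Matrix (Fin p) (Fin n2) ℝ)
    (hR : R ^ s = 0)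
    (hE : (S * E * P).submatrix ⇑finSumFinEquiv ⇑finSumFinEquiv = Matrix.fromBlocks 1 0 0 R)
    (hC : (C * P).submatrix id ⇑finSumFinEquiv = Matrix.fromCols C1 C2)
    (ud : ℕ → Fin m → ℝ) (z1d : ℕ → Fin n1 → ℝ) (z2d : ℕ → Fin n2 → ℝ)
    (xd : ℕ → Fin (n1 + n2) → ℝ) (yd : ℕ → Fin p → ℝ)
    (hz1 : ∀ k < T, z1d (k + 1) = A1 *ᵥ z1d k + B1 *ᵥ ud k)
    (hz2 : ∀ k ≤ T, z2d k = -(∑ j ∈ Finset.range s, ((R ^ j * B2) *ᵥ ud (k + j))))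
    (hxd : ∀ k ≤ T, xd k = P *ᵥ (fun i => Sum.elim (z1d k) (z2d k) (finSumFinEquiv.symm i)))
    (hyd : ∀ k ≤ T, yd k = C *ᵥ xd k)
    (hrk : (Matrix.fromRows (histMat T xd 0)
      (Matrix.fromRows (histMat T ud 0) (histMat T yd 1))).rank = (n1 + n2) + m) :
    (Matrix.fromRows E C).rank = n1 + n2 := by
  have hfast : ∀ k < T, z2d k = -(B2 *ᵥ ud k) + R *ᵥ z2d (k + 1) := fun k hk => by
    rw [hz2 k hk.le, hz2 (k + 1) hk]
    exact fastState_eq_neg_add_mulVec_succ hR B2 ud k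
  have hRC := fromRows_mulVec_injective_of_data_rank hC hz1 hfast hxd hyd (by simpa using hrk)
  have hEC := fromRows_mulVec_injective_of_weierstrass hP hE hC hRC
  simpa using (rank_eq_card_width_iff_mulVec_injective _).mpr hEC

theorem stmt_7 (n1 n2 s m p T : ℕ) (hs : 1 ≤ s) (hT : 1 ≤ T)
    (E A : Matrix (Fin (n1 + n2)) (Fin (n1 + n2)) ℝ)
    (B : Matrix (Fin (n1 + n2)) (Fin m) ℝ)
    (C : Matrix (Fin p) (Fin (n1 + n2)) ℝ)
    (S P : Matrix (Fin (n1 + n2)) (Fin (n1 + n2)) ℝ)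
    (hS : IsUnit S) (hP : IsUnit P)
    (A1 : Matrix (Fin n1) (Fin n1) ℝ) (R : Matrix (Fin n2) (Fin n2) ℝ)
    (B1 : Matrix (Fin n1) (Fin m) ℝ) (B2 : Matrix (Fin n2) (Fin m) ℝ)
    (C1 : Matrix (Fin p) (Fin n1) ℝ) (C2 : Matrix (Fin p) (Fin n2) ℝ)
    (hR : R ^ s = 0)
    (hE : (S * E * P).submatrix ⇑finSumFinEquiv ⇑finSumFinEquiv = Matrix.fromBlocks 1 0 0 R)
    (hA : (S * A * P).submatrix ⇑finSumFinEquiv ⇑finSumFinEquiv = Matrix.fromBlocks A1 0 0 1)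
    (hB : (S * B).submatrix ⇑finSumFinEquiv id = Matrix.fromRows B1 B2)
    (hC : (C * P).submatrix id ⇑finSumFinEquiv = Matrix.fromCols C1 C2)
    (ud : ℕ → Fin m → ℝ) (z1d : ℕ → Fin n1 → ℝ) (z2d : ℕ → Fin n2 → ℝ)
    (xd : ℕ → Fin (n1 + n2) → ℝ) (yd : ℕ → Fin p → ℝ)
    (hz1 : ∀ k < T, z1d (k + 1) = A1 *ᵥ z1d k + B1 *ᵥ ud k)
    (hz2 : ∀ k ≤ T, z2d k = -(∑ j ∈ Finset.range s, ((R ^ j * B2) *ᵥ ud (k + j))))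
    (hxd : ∀ k ≤ T, xd k = P *ᵥ (fun i => Sum.elim (z1d k) (z2d k) (finSumFinEquiv.symm i)))
    (hyd : ∀ k ≤ T, yd k = C *ᵥ xd k)
    (hrk : (Matrix.fromRows (histMat T xd 0)
      (Matrix.fromRows (histMat T ud 0) (histMat T yd 1))).rank = (n1 + n2) + m) :
    (Matrix.fromRows E C).rank = n1 + n2 :=
  stmt_7_general n1 n2 s m p T E C S P hP A1 R B1 B2 C1 C2 hR hE hC ud z1d z2d xd yd hz1 hz2 hxd hyd
    hrk
end
end

section
/- Assume the Weierstrass decomposition, historical data, and persistent excitation hypotheses, and assume the fast subsystem is controllable, i.e. the matrix Q = [B2, R·B2, …, R^{s−1}·B2] ∈ ℝ^{n2×(s·m)} has rank n2. Then the (n+p) × n stacked matrix col(E, C) has rank n if and only if rank col(X_p, U_p, Y_f) = n + m. -/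
/-
Both ranks are governed by the stacked fast-subsystem matrix `[R; C₂]`.
In Weierstrass coordinates `[E; C]` becomes `[[I, 0], [0, R], [C₁, C₂]]`, whose rank is
`n₁ + rank [R; C₂]`. On the data side, the fast state is `z₂(k) = -Q ū(k)` with `ū(k)` the stack
`u(k), …, u(k+s-1)`, and nilpotency of `R` gives `R z₂(k+1) = z₂(k) + B₂ u(k)`. Hence, up to an
invertible change of rows, the column `(x(k), u(k), y(k+1))` of `[X_p; U_p; Y_f]` is
`(z₁(k), u(k), -[R; C₂] Q ū(k+1))`: a fixed block matrix applied to the persistently exciting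
column `(z₁(k), u(k), …, u(k+s))`. As that data matrix and `Q` have full row rank,
`rank [X_p; U_p; Y_f] = n₁ + m + rank [R; C₂]`, and both sides of the equivalence say
`rank [R; C₂] = n₂`.
-/

open Matrix

noncomputable section

open Module Finset

theorem LinearMap.finrank_range_prodMap {K M M₂ M₃ M₄ : Type*} [Field K] [AddCommGroup M]
    [AddCommGroup M₂] [AddCommGroup M₃] [AddCommGroup M₄] [Module K M] [Module K M₂]
    [Module K M₃] [Module K M₄] [FiniteDimensional K M₃] [FiniteDimensional K M₄]
    (f : M →ₗ[K] M₃) (g : M₂ →ₗ[K] M₄) :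
    finrank K (range (f.prodMap g)) = finrank K (range f) + finrank K (range g) := by
  have h : range (f.prodMap g) = range ((range f).subtype.prodMap (range g).subtype) := by
    rw [range_prodMap, range_prodMap, Submodule.range_subtype, Submodule.range_subtype]
  rw [h, finrank_range_of_inj (Subtype.val_injective.prodMap Subtype.val_injective),
    finrank_prod]

namespace Matrix

variable {K l m n o : Type*}

theorem rank_neg [Field K] [Fintype n] (A : Matrix m n K) : (-A).rank = A.rank := by
  simpa using rank_smul_of_mem_nonZeroDivisors A (c := -1)
    (mem_nonZeroDivisors_of_ne_zero (neg_ne_zero.mpr one_ne_zero))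

theorem rank_mul_eq_left_of_rank_eq_card [Field K] [Fintype m] [Fintype n] (A : Matrix l m K)
    (B : Matrix m n K) (hB : B.rank = Fintype.card m) : (A * B).rank = A.rank := by
  have hrange : LinearMap.range B.mulVecLin = ⊤ :=
    Submodule.eq_top_of_finrank_eq (by simpa [rank] using hB)
  rw [rank, rank, mulVecLin_mul, LinearMap.range_comp_of_range_eq_top _ hrange]

theorem rank_fromBlocks_one_zero_zero [Field K] [Fintype l] [DecidableEq l] [Fintype n]
    [Fintype o] (N : Matrix o n K) :
    (fromBlocks (1 : Matrix l l K) 0 0 N).rank = Fintype.card l + N.rank := by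
  let eDom := LinearEquiv.sumArrowLequivProdArrow l n K K
  let eCod := LinearEquiv.sumArrowLequivProdArrow l o K K
  have h : (fromBlocks (1 : Matrix l l K) 0 0 N).mulVecLin =
      eCod.symm.toLinearMap ∘ₗ (LinearMap.id.prodMap N.mulVecLin) ∘ₗ eDom.toLinearMap := by
    ext v (i | i)
    · simp [eDom, eCod, fromBlocks_mulVec]
    · simp [eDom, eCod, fromBlocks_mulVec]; rfl
  rw [rank, h, LinearMap.range_comp, LinearMap.range_comp_of_range_eq_top _ eDom.range,
    LinearEquiv.finrank_map_eq, LinearMap.finrank_range_prodMap, LinearMap.range_id,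
    finrank_top, finrank_fintype_fun_eq_card, rank]

theorem rank_fromBlocks_one_zero [Field K] [Fintype l] [DecidableEq l] [Fintype n] [Fintype o]
    (X : Matrix o l K) (Y : Matrix o n K) :
    (fromBlocks (1 : Matrix l l K) 0 X Y).rank = Fintype.card l + Y.rank := by
  classical
  have h : fromBlocks (1 : Matrix l l K) 0 X Y =
      (fromBlocks 1 0 X 1 : Matrix (l ⊕ o) (l ⊕ o) K) *
        (fromBlocks 1 0 0 Y : Matrix (l ⊕ o) (l ⊕ n) K) := by
    simp [fromBlocks_multiply]
  rw [h, rank_mul_eq_right_of_isUnit_det _ _ (by simp), rank_fromBlocks_one_zero_zero]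

theorem mulVec_sum_pow_mul_mulVec_shift [CommRing K] [Fintype n] [DecidableEq n] [Fintype m]
    {R : Matrix n n K} {s : ℕ} (hR : R ^ s = 0) (B : Matrix n m K) (u : ℕ → m → K) (k : ℕ) :
    R *ᵥ ∑ j ∈ range s, (R ^ j * B) *ᵥ u (k + 1 + j) =
      ∑ j ∈ range s, (R ^ j * B) *ᵥ u (k + j) - B *ᵥ u k := by
  have hstep (j : ℕ) :
      R *ᵥ ((R ^ j * B) *ᵥ u (k + 1 + j)) = (R ^ (j + 1) * B) *ᵥ u (k + (j + 1)) := by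
    rw [mulVec_mulVec, ← Matrix.mul_assoc, ← pow_succ', add_right_comm k 1 j, add_assoc]
  have hsucc := sum_range_succ' (fun j => (R ^ j * B) *ᵥ u (k + j)) s
  rw [sum_range_succ, hR, Matrix.zero_mul, zero_mulVec, add_zero] at hsucc
  simp only [mulVec_sum, hstep, hsucc, pow_zero, Matrix.one_mul, add_zero, add_sub_cancel_right]

theorem sum_range_mulVec [CommRing K] [Fintype m] (M : ℕ → Matrix n m K) (v : ℕ → m → K)
    (s : ℕ) :
    ∑ j ∈ range s, M j *ᵥ v j =
      (of fun i (jl : Fin s × m) => M jl.1 i jl.2) *ᵥ fun jl => v jl.1 jl.2 := by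
  ext i
  simp [mulVec, dotProduct, Fintype.sum_prod_type, Finset.sum_apply,
    ← Fin.sum_univ_eq_sum_range]

end Matrix

theorem mulVec_mulVec_of_submatrix_eq_fromCols {K ι n₁ n₂ p : Type*} [CommRing K] [Fintype ι]
    [Fintype n₁] [Fintype n₂] (e : n₁ ⊕ n₂ ≃ ι) {P : Matrix ι ι K}
    {C : Matrix p ι K} {C₁ : Matrix p n₁ K} {C₂ : Matrix p n₂ K}
    (hC : (C * P).submatrix id e = fromCols C₁ C₂) (v₁ : n₁ → K) (v₂ : n₂ → K) :
    C *ᵥ (P *ᵥ fun i => Sum.elim v₁ v₂ (e.symm i)) = C₁ *ᵥ v₁ + C₂ *ᵥ v₂ := by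
  rw [mulVec_mulVec, ← fromCols_mulVec_sumElim, ← hC]
  ext i
  simp only [mulVec, dotProduct, submatrix_apply, id_eq]
  rw [← e.sum_comp]
  simp

theorem rank_fromRows_of_weierstrass {K ι n₁ n₂ p : Type*} [Field K] [Fintype ι]
    [DecidableEq ι] [Fintype n₁] [DecidableEq n₁] [Fintype n₂] [Fintype p] (e : n₁ ⊕ n₂ ≃ ι)
    {E S P : Matrix ι ι K} {C : Matrix p ι K} {R : Matrix n₂ n₂ K} {C₁ : Matrix p n₁ K}
    {C₂ : Matrix p n₂ K} (hS : IsUnit S) (hP : IsUnit P)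
    (hE : (S * E * P).submatrix e e = fromBlocks 1 0 0 R)
    (hC : (C * P).submatrix id e = fromCols C₁ C₂) :
    (fromRows E C).rank = Fintype.card n₁ + (fromRows R C₂).rank := by
  classical
  have hSEP : fromRows (S * E * P) (C * P) =
      fromBlocks S 0 0 (1 : Matrix p p K) * fromRows E C * P := by
    simp [fromBlocks_mul_fromRows, fromRows_mul, Matrix.mul_assoc]
  have hblocks : (fromRows (S * E * P) (C * P)).submatrix
      ((Equiv.sumAssoc n₁ n₂ p).symm.trans (Equiv.sumCongr e (Equiv.refl p))) e =
      fromBlocks 1 0 (fromRows 0 C₁) (fromRows R C₂) := by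
    have hE' (i j) : (S * E * P) (e i) (e j) = fromBlocks 1 0 0 R i j := congr_fun₂ hE i j
    have hC' (i j) : (C * P) i (e j) = fromCols C₁ C₂ i j := congr_fun₂ hC i j
    ext (i | i | i) (j | j) <;> simp [hE', hC']
  have hdetS : IsUnit (fromBlocks S 0 0 (1 : Matrix p p K)).det := by
    simpa [det_fromBlocks_zero₂₁] using (isUnit_iff_isUnit_det S).mp hS
  rw [← rank_mul_eq_left_of_isUnit_det P _ ((isUnit_iff_isUnit_det P).mp hP),
    ← rank_mul_eq_right_of_isUnit_det _ _ hdetS, ← Matrix.mul_assoc, ← hSEP,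
    ← rank_submatrix _ _ e, hblocks, rank_fromBlocks_one_zero]

section histMat

variable {ι κ : Type} {T off : ℕ}

theorem histMat_congr {f g : ℕ → ι → ℝ} (h : ∀ k < T, f k = g k) :
    histMat T f 0 = histMat T g 0 := by
  ext i k
  simp [histMat, h k k.isLt]

theorem mul_histMat [Fintype κ] (M : Matrix ι κ ℝ) (f : ℕ → κ → ℝ) :
    M * histMat T f off = histMat T (fun k => M *ᵥ f k) off :=
  rfl

theorem fromRows_histMat (f : ℕ → ι → ℝ) (g : ℕ → κ → ℝ) :
    fromRows (histMat T f off) (histMat T g off) =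
      histMat T (fun k => Sum.elim (f k) (g k)) off := by
  ext (i | i) k <;> rfl

theorem rank_histMat_split_input {n₁ m : Type} [Fintype n₁] [Fintype m] (s : ℕ)
    (z : ℕ → n₁ → ℝ) (u : ℕ → m → ℝ) :
    (histMat T (fun k => Sum.elim (Sum.elim (z k) (u k))
      fun jl : Fin s × m => u (k + (jl.1 + 1)) jl.2) 0).rank =
      (of fun i (k : Fin T) =>
        Sum.elim (z k) (fun jl : Fin (s + 1) × m => u (k + jl.1) jl.2) i).rank := by
  let χ : (n₁ ⊕ m) ⊕ (Fin s × m) ≃ n₁ ⊕ (Fin (s + 1) × m) :=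
    (Equiv.sumAssoc _ _ _).trans (Equiv.sumCongr (Equiv.refl _)
      (((finSuccEquiv s).prodCongr (Equiv.refl m)).trans optionProdEquiv).symm)
  rw [← rank_submatrix _ χ (Equiv.refl (Fin T))]
  congr 1
  ext ((i | i) | ⟨j, i⟩) k <;> simp [histMat, χ]

end histMat

section DataMatrix

variable {ι n₁ n₂ m p : Type} [Fintype ι] [DecidableEq ι] [Fintype n₁] [DecidableEq n₁]
  [Fintype n₂] [DecidableEq n₂] [Fintype m] [DecidableEq m] [Fintype p] [DecidableEq p]
  (e : n₁ ⊕ n₂ ≃ ι) {s T : ℕ} {P : Matrix ι ι ℝ} {C : Matrix p ι ℝ} {A₁ : Matrix n₁ n₁ ℝ}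
  {R : Matrix n₂ n₂ ℝ} {B₁ : Matrix n₁ m ℝ} {B₂ : Matrix n₂ m ℝ} {C₁ : Matrix p n₁ ℝ}
  {C₂ : Matrix p n₂ ℝ} {u : ℕ → m → ℝ} {z₁ : ℕ → n₁ → ℝ} {z₂ : ℕ → n₂ → ℝ} {x : ℕ → ι → ℝ}
  {y : ℕ → p → ℝ}

theorem exists_histColumn_eq_mulVec_of_weierstrass (hP : IsUnit P) (hR : R ^ s = 0)
    (hC : (C * P).submatrix id e = fromCols C₁ C₂)
    (hz₁ : ∀ k < T, z₁ (k + 1) = A₁ *ᵥ z₁ k + B₁ *ᵥ u k)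
    (hz₂ : ∀ k ≤ T, z₂ k = -∑ j ∈ range s, (R ^ j * B₂) *ᵥ u (k + j))
    (hx : ∀ k ≤ T, x k = P *ᵥ fun i => Sum.elim (z₁ k) (z₂ k) (e.symm i))
    (hy : ∀ k ≤ T, y k = C *ᵥ x k)
    (hQ : (of fun i (jl : Fin s × m) => (R ^ (jl.1 : ℕ) * B₂) i jl.2).rank = Fintype.card n₂) :
    ∃ G : Matrix (ι ⊕ (m ⊕ p)) ((n₁ ⊕ m) ⊕ (Fin s × m)) ℝ,
      G.rank = Fintype.card n₁ + Fintype.card m + (fromRows R C₂).rank ∧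
      ∀ k < T, Sum.elim (x k) (Sum.elim (u k) (y (k + 1))) =
        G *ᵥ Sum.elim (Sum.elim (z₁ k) (u k)) fun jl => u (k + (jl.1 + 1)) jl.2 := by
  set Q := of fun i (jl : Fin s × m) => (R ^ (jl.1 : ℕ) * B₂) i jl.2
  -- expresses `(z₁(k), u(k), z₂(k), y(k+1))` through `(z₁(k), u(k), u(k+1), …, u(k+s))`
  let F : Matrix ((n₁ ⊕ m) ⊕ (n₂ ⊕ p)) ((n₁ ⊕ m) ⊕ (Fin s × m)) ℝ :=
    fromBlocks 1 0 (fromBlocks 0 (-B₂) (C₁ * A₁) (C₁ * B₁)) (-(fromRows R C₂ * Q))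
  let τ : ι ⊕ (m ⊕ p) ≃ (n₁ ⊕ m) ⊕ (n₂ ⊕ p) :=
    (Equiv.sumCongr e.symm (Equiv.refl _)).trans (Equiv.sumSumSumComm _ _ _ _)
  let G := fromBlocks P 0 0 (1 : Matrix (m ⊕ p) (m ⊕ p) ℝ) * F.submatrix τ id
  refine ⟨G, ?_, fun k hk => ?_⟩
  · have hdet : IsUnit (fromBlocks P 0 0 (1 : Matrix (m ⊕ p) (m ⊕ p) ℝ)).det := by
      simpa [det_fromBlocks_zero₂₁] using (isUnit_iff_isUnit_det P).mp hP
    rw [rank_mul_eq_right_of_isUnit_det _ _ hdet,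
      show id = ⇑(Equiv.refl ((n₁ ⊕ m) ⊕ (Fin s × m))) from rfl, rank_submatrix,
      rank_fromBlocks_one_zero, rank_neg, rank_mul_eq_left_of_rank_eq_card _ _ hQ,
      Fintype.card_sum]
  have hz₂_succ : z₂ (k + 1) = -(Q *ᵥ fun jl => u (k + (jl.1 + 1)) jl.2) := by
    rw [hz₂ (k + 1) hk, sum_range_mulVec]
    simp only [Q, add_assoc, add_comm 1]
  have hz₂_eq : z₂ k = R *ᵥ z₂ (k + 1) - B₂ *ᵥ u k := by
    rw [hz₂ k hk.le, hz₂ (k + 1) hk, mulVec_neg, mulVec_sum_pow_mul_mulVec_shift hR]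
    abel
  have hy_succ : y (k + 1) = C₁ *ᵥ z₁ (k + 1) + C₂ *ᵥ z₂ (k + 1) := by
    rw [hy (k + 1) hk, hx (k + 1) hk, mulVec_mulVec_of_submatrix_eq_fromCols e hC]
  have hF : F *ᵥ Sum.elim (Sum.elim (z₁ k) (u k)) (fun jl => u (k + (jl.1 + 1)) jl.2) =
      Sum.elim (Sum.elim (z₁ k) (u k)) (Sum.elim (z₂ k) (y (k + 1))) := by
    ext ((i | i) | (i | i)) <;>
      simp [F, fromBlocks_mulVec, fromRows_mul, hz₂_eq, hy_succ, hz₁ k hk, hz₂_succ,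
        ← mulVec_mulVec, neg_mulVec, mulVec_neg, mulVec_add, neg_add_eq_sub]
  have hτ : Sum.elim (Sum.elim (z₁ k) (u k)) (Sum.elim (z₂ k) (y (k + 1))) ∘ τ =
      Sum.elim (fun i => Sum.elim (z₁ k) (z₂ k) (e.symm i)) (Sum.elim (u k) (y (k + 1))) := by
    ext (i | i | i)
    · obtain ⟨j | j, rfl⟩ := e.surjective i <;> simp [τ]
    all_goals rfl
  rw [← mulVec_mulVec, show ∀ v, F.submatrix τ id *ᵥ v = (F *ᵥ v) ∘ τ from fun _ => rfl, hF, hτ,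
    fromBlocks_mulVec, hx k hk.le]
  simp

theorem rank_fromRows_histMat_of_weierstrass (hP : IsUnit P) (hR : R ^ s = 0)
    (hC : (C * P).submatrix id e = fromCols C₁ C₂)
    (hz₁ : ∀ k < T, z₁ (k + 1) = A₁ *ᵥ z₁ k + B₁ *ᵥ u k)
    (hz₂ : ∀ k ≤ T, z₂ k = -∑ j ∈ range s, (R ^ j * B₂) *ᵥ u (k + j))
    (hx : ∀ k ≤ T, x k = P *ᵥ fun i => Sum.elim (z₁ k) (z₂ k) (e.symm i))
    (hy : ∀ k ≤ T, y k = C *ᵥ x k)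
    (hPE : (of fun i (k : Fin T) =>
      Sum.elim (z₁ k) (fun jl : Fin (s + 1) × m => u (k + jl.1) jl.2) i).rank =
        Fintype.card n₁ + (s + 1) * Fintype.card m)
    (hQ : (of fun i (jl : Fin s × m) => (R ^ (jl.1 : ℕ) * B₂) i jl.2).rank = Fintype.card n₂) :
    (fromRows (histMat T x 0) (fromRows (histMat T u 0) (histMat T y 1))).rank =
      Fintype.card n₁ + Fintype.card m + (fromRows R C₂).rank := by
  obtain ⟨G, hG, hcol⟩ :=
    exists_histColumn_eq_mulVec_of_weierstrass e hP hR hC hz₁ hz₂ hx hy hQ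
  have hW : (histMat T (fun k => Sum.elim (Sum.elim (z₁ k) (u k))
      fun jl : Fin s × m => u (k + (jl.1 + 1)) jl.2) 0).rank =
      Fintype.card ((n₁ ⊕ m) ⊕ (Fin s × m)) := by
    rw [rank_histMat_split_input, hPE]
    simp only [Fintype.card_sum, Fintype.card_prod, Fintype.card_fin]
    ring
  rw [show histMat T y 1 = histMat T (fun k => y (k + 1)) 0 from rfl, fromRows_histMat,
    fromRows_histMat, histMat_congr hcol, ← mul_histMat,
    rank_mul_eq_left_of_rank_eq_card _ _ hW, hG]

end DataMatrix

theorem stmt_8_general (n1 n2 s m p T : ℕ)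
    (E : Matrix (Fin (n1 + n2)) (Fin (n1 + n2)) ℝ)
    (C : Matrix (Fin p) (Fin (n1 + n2)) ℝ)
    (S P : Matrix (Fin (n1 + n2)) (Fin (n1 + n2)) ℝ)
    (hS : IsUnit S) (hP : IsUnit P)
    (A1 : Matrix (Fin n1) (Fin n1) ℝ) (R : Matrix (Fin n2) (Fin n2) ℝ)
    (B1 : Matrix (Fin n1) (Fin m) ℝ) (B2 : Matrix (Fin n2) (Fin m) ℝ)
    (C1 : Matrix (Fin p) (Fin n1) ℝ) (C2 : Matrix (Fin p) (Fin n2) ℝ)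
    (hR : R ^ s = 0)
    (hE : (S * E * P).submatrix ⇑finSumFinEquiv ⇑finSumFinEquiv = Matrix.fromBlocks 1 0 0 R)
    (hC : (C * P).submatrix id ⇑finSumFinEquiv = Matrix.fromCols C1 C2)
    (ud : ℕ → Fin m → ℝ) (z1d : ℕ → Fin n1 → ℝ) (z2d : ℕ → Fin n2 → ℝ)
    (xd : ℕ → Fin (n1 + n2) → ℝ) (yd : ℕ → Fin p → ℝ)
    (hz1 : ∀ k < T, z1d (k + 1) = A1 *ᵥ z1d k + B1 *ᵥ ud k)
    (hz2 : ∀ k ≤ T, z2d k = -(∑ j ∈ Finset.range s, ((R ^ j * B2) *ᵥ ud (k + j))))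
    (hxd : ∀ k ≤ T, xd k = P *ᵥ (fun i => Sum.elim (z1d k) (z2d k) (finSumFinEquiv.symm i)))
    (hyd : ∀ k ≤ T, yd k = C *ᵥ xd k)
    (hPE : (Matrix.of fun (i : Fin n1 ⊕ (Fin (s + 1) × Fin m)) (k : Fin T) =>
        Sum.elim (z1d (k : ℕ))
          (fun jl => ud ((k : ℕ) + (jl.1 : ℕ)) jl.2) i).rank = n1 + (s + 1) * m)
    (hQ : (Matrix.of fun (i : Fin n2) (jl : Fin s × Fin m) =>
      (R ^ (jl.1 : ℕ) * B2) i jl.2).rank = n2) :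
    (Matrix.fromRows E C).rank = n1 + n2
      ↔ (Matrix.fromRows (histMat T xd 0)
          (Matrix.fromRows (histMat T ud 0) (histMat T yd 1))).rank = (n1 + n2) + m := by
  rw [rank_fromRows_of_weierstrass finSumFinEquiv hS hP hE hC,
    rank_fromRows_histMat_of_weierstrass finSumFinEquiv hP hR hC hz1 hz2 hxd hyd
      (by simpa using hPE) (by simpa using hQ)]
  simp only [Fintype.card_fin]
  omega

theorem stmt_8 (n1 n2 s m p T : ℕ) (hs : 1 ≤ s) (hT : 1 ≤ T)
    (E A : Matrix (Fin (n1 + n2)) (Fin (n1 + n2)) ℝ)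
    (B : Matrix (Fin (n1 + n2)) (Fin m) ℝ)
    (C : Matrix (Fin p) (Fin (n1 + n2)) ℝ)
    (S P : Matrix (Fin (n1 + n2)) (Fin (n1 + n2)) ℝ)
    (hS : IsUnit S) (hP : IsUnit P)
    (A1 : Matrix (Fin n1) (Fin n1) ℝ) (R : Matrix (Fin n2) (Fin n2) ℝ)
    (B1 : Matrix (Fin n1) (Fin m) ℝ) (B2 : Matrix (Fin n2) (Fin m) ℝ)
    (C1 : Matrix (Fin p) (Fin n1) ℝ) (C2 : Matrix (Fin p) (Fin n2) ℝ)
    (hR : R ^ s = 0)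
    (hE : (S * E * P).submatrix ⇑finSumFinEquiv ⇑finSumFinEquiv = Matrix.fromBlocks 1 0 0 R)
    (hA : (S * A * P).submatrix ⇑finSumFinEquiv ⇑finSumFinEquiv = Matrix.fromBlocks A1 0 0 1)
    (hB : (S * B).submatrix ⇑finSumFinEquiv id = Matrix.fromRows B1 B2)
    (hC : (C * P).submatrix id ⇑finSumFinEquiv = Matrix.fromCols C1 C2)
    (ud : ℕ → Fin m → ℝ) (z1d : ℕ → Fin n1 → ℝ) (z2d : ℕ → Fin n2 → ℝ)
    (xd : ℕ → Fin (n1 + n2) → ℝ) (yd : ℕ → Fin p → ℝ)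
    (hz1 : ∀ k < T, z1d (k + 1) = A1 *ᵥ z1d k + B1 *ᵥ ud k)
    (hz2 : ∀ k ≤ T, z2d k = -(∑ j ∈ Finset.range s, ((R ^ j * B2) *ᵥ ud (k + j))))
    (hxd : ∀ k ≤ T, xd k = P *ᵥ (fun i => Sum.elim (z1d k) (z2d k) (finSumFinEquiv.symm i)))
    (hyd : ∀ k ≤ T, yd k = C *ᵥ xd k)
    (hPE : (Matrix.of fun (i : Fin n1 ⊕ (Fin (s + 1) × Fin m)) (k : Fin T) =>
        Sum.elim (z1d (k : ℕ))
          (fun jl => ud ((k : ℕ) + (jl.1 : ℕ)) jl.2) i).rank = n1 + (s + 1) * m)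
    (hQ : (Matrix.of fun (i : Fin n2) (jl : Fin s × Fin m) =>
      (R ^ (jl.1 : ℕ) * B2) i jl.2).rank = n2) :
    (Matrix.fromRows E C).rank = n1 + n2
      ↔ (Matrix.fromRows (histMat T xd 0)
          (Matrix.fromRows (histMat T ud 0) (histMat T yd 1))).rank = (n1 + n2) + m :=
  stmt_8_general n1 n2 s m p T E C S P hS hP A1 R B1 B2 C1 C2 hR hE hC ud z1d z2d xd yd hz1 hz2 hxd
    hyd hPE hQ
end
end
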